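/- arXiv:1809.04692 — 8 statements merged into one kernel-verified Lean document; each statement's English description precedes it below -/
import Mathlib

section
/- Define the Plücker coordinates of a matrix g = [[a,b,c],[d,e,f],[g,h,i]] in SL(3,ℝ) by A₁ = −g, B₁ = −h, C₁ = −i, A₂ = −(dh−eg), B₂ = di−fg, C₂ = −(ei−fh). Let N ≤ SL(3,ℝ) be the subgroup of upper triangular matrices with 1's on the diagonal. Then the assignment g ↦ (A₁,B₁,C₁,A₂,B₂,C₂) induces a bijection between the coset space N\SL(3,ℝ) and the set of tuples (A₁,B₁,C₁,A₂,B₂,C₂) ∈ ℝ⁶ satisfying A₁C₂ + B₁B₂ + C₁A₂ = 0 with (A₁,B₁,C₁) ≠ (0,0,0) and (A₂,B₂,C₂) ≠ (0,0,0). Moreover, a coset Ng contains an element of SL(3,ℤ) if and only if A₁, B₁, C₁ are integers with gcd(A₁,B₁,C₁) = 1 and A₂, B₂, C₂ are integers with gcd(A₂,B₂,C₂) = 1. -/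
/-!
Both Plücker triples only see the last two rows of `g`: `(A₁, B₁, C₁) = -v` for the bottom row
`v`, and `(A₂, B₂, C₂)` is, up to sign and order, `w = r ⨯₃ v` for the middle row `r`. Left
multiplication by `N` replaces `r` by `r + t v` and changes the top row freely, so it preserves
`(v, w)`; conversely `w` determines `r` modulo `v` because `v ≠ 0`, and then the coset.

A pair `(v, w)` with `v ⬝ᵥ w = 0` is realized by a matrix of determinant one as soon as
`u ⬝ᵥ v = 1` and `p ⬝ᵥ w = 1` for some `u`, `p`: take the rows `p`, `u ⨯₃ w`, `v`, using
`(u ⨯₃ w) ⨯₃ v = (u ⬝ᵥ v) w - (w ⬝ᵥ v) u = w`. Over `ℝ` such `u`, `p` exist iff `v, w ≠ 0`; over `ℤ`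
iff `v`, `w` have coprime entries. Conversely, for `γ ∈ SL(3, ℤ)` the identity
`det γ = γ 0 ⬝ᵥ (γ 1 ⨯₃ γ 2) = 1` forces both `γ 2` and `γ 1 ⨯₃ γ 2` to be primitive.
-/

/-- The Plücker coordinates `(A₁, B₁, C₁, A₂, B₂, C₂)` of a 3×3 real matrix. -/
def pluckerM (g : Matrix (Fin 3) (Fin 3) ℝ) : Fin 6 → ℝ :=
  ![-(g 2 0), -(g 2 1), -(g 2 2),
    -(g 1 0 * g 2 1 - g 1 1 * g 2 0),
    g 1 0 * g 2 2 - g 1 2 * g 2 0,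
    -(g 1 1 * g 2 2 - g 1 2 * g 2 1)]

/-- Membership in the subgroup `N` of upper unitriangular matrices. -/
def isUniUpper (n : Matrix (Fin 3) (Fin 3) ℝ) : Prop :=
  n 0 0 = 1 ∧ n 1 1 = 1 ∧ n 2 2 = 1 ∧ n 1 0 = 0 ∧ n 2 0 = 0 ∧ n 2 1 = 0

open Matrix
open scoped MatrixGroups

section CrossProduct

variable {R : Type*} [CommRing R]

lemma add_smul_cross_self (u v : Fin 3 → R) (t : R) : (u + t • v) ⨯₃ v = u ⨯₃ v := by
  simp [cross_self]

lemma cross_cross_eq_of_dotProduct_eq_one {u v w : Fin 3 → R} (hu : u ⬝ᵥ v = 1)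
    (hvw : v ⬝ᵥ w = 0) : u ⨯₃ w ⨯₃ v = w := by
  rw [cross_cross_eq_smul_sub_smul, hu, dotProduct_comm, hvw, one_smul, zero_smul, sub_zero]

lemma det_eq_dotProduct_cross (A : Matrix (Fin 3) (Fin 3) R) : A.det = A 0 ⬝ᵥ A 1 ⨯₃ A 2 := by
  rw [triple_product_eq_det]
  congr
  ext i j
  fin_cases i <;> rfl

lemma RingHom.comp_cross {S : Type*} [CommRing S] (f : R →+* S) (v w : Fin 3 → R) :
    f ∘ (v ⨯₃ w) = (f ∘ v) ⨯₃ (f ∘ w) := by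
  ext i
  fin_cases i <;> simp [cross_apply]

end CrossProduct

lemma exists_dotProduct_eq_one_of_ne_zero {K ι : Type*} [Field K] [Fintype ι] [DecidableEq ι]
    {v : ι → K} (hv : v ≠ 0) : ∃ u, u ⬝ᵥ v = 1 := by
  obtain ⟨i, hi⟩ := Function.ne_iff.mp hv
  exact ⟨Pi.single i (v i)⁻¹, by rw [single_dotProduct, inv_mul_cancel₀ hi]⟩

lemma exists_eq_smul_of_cross_eq_zero {K : Type*} [Field K] {u v : Fin 3 → K} (h : u ⨯₃ v = 0)
    (hv : v ≠ 0) : ∃ t : K, u = t • v := by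
  have : ¬LinearIndependent K ![v, u] := by
    rw [← crossProduct_ne_zero_iff_linearIndependent, ← cross_anticomm, h, neg_zero, not_not]
  simpa [LinearIndependent.pair_iff' hv, eq_comm] using this

lemma Int.gcd_gcd_eq_one_iff {a b c : ℤ} :
    Int.gcd a (Int.gcd b c) = 1 ↔ ∃ x y z : ℤ, x * a + y * b + z * c = 1 := by
  constructor
  · intro h
    have hbc := Int.gcd_eq_gcd_ab b c
    have habc := Int.gcd_eq_gcd_ab a (Int.gcd b c)
    rw [h, Nat.cast_one] at habc
    exact ⟨a.gcdA (b.gcd c), b.gcdA c * a.gcdB (b.gcd c), b.gcdB c * a.gcdB (b.gcd c),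
      by linear_combination -habc - a.gcdB (b.gcd c) * hbc⟩
  · rintro ⟨x, y, z, h⟩
    have : IsCoprime a (y * b + z * c) := ⟨x, 1, by linear_combination h⟩
    exact Int.isCoprime_iff_gcd_eq_one.mp (this.of_isCoprime_of_dvd_right
      (dvd_add ((Int.gcd_dvd_left b c).mul_left y) ((Int.gcd_dvd_right b c).mul_left z)))

namespace Matrix.SpecialLinearGroup

variable {R : Type*} [CommRing R]

lemma row_mul_inv_eq_iff {n : Type*} [Fintype n] [DecidableEq n] (g h : SpecialLinearGroup n R)
    (i : n) (x : n → R) : (h * g⁻¹) i = x ↔ h i = x ᵥ* (g : Matrix n n R) := by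
  have hg : IsUnit (g : Matrix n n R) := (isUnit_iff_isUnit_det _).mpr (by simp)
  rw [← (vecMul_injective_of_isUnit hg).eq_iff, ← mul_apply_eq_vecMul, ← coe_mul,
    inv_mul_cancel_right, eq_comm]

lemma dotProduct_cross_eq_one (g : SL(3, R)) : g 0 ⬝ᵥ g 1 ⨯₃ g 2 = 1 :=
  (det_eq_dotProduct_cross (g : Matrix (Fin 3) (Fin 3) R)).symm.trans g.det_coe

lemma exists_dotProduct_row_two_eq_one (g : SL(3, R)) : ∃ u, u ⬝ᵥ g 2 = 1 :=
  ⟨g 0 ⨯₃ g 1, by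
    rw [dotProduct_comm, ← triple_product_permutation, ← triple_product_permutation,
      dotProduct_cross_eq_one]⟩

lemma exists_row_two_eq_and_cross_eq {u v w p : Fin 3 → R} (hu : u ⬝ᵥ v = 1) (hp : p ⬝ᵥ w = 1)
    (hvw : v ⬝ᵥ w = 0) : ∃ g : SL(3, R), g 2 = v ∧ g 1 ⨯₃ g 2 = w := by
  have hw : u ⨯₃ w ⨯₃ v = w := cross_cross_eq_of_dotProduct_eq_one hu hvw
  exact ⟨⟨![p, u ⨯₃ w, v], by rw [← triple_product_eq_det, hw, hp]⟩, rfl, hw⟩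

lemma exists_row_two_eq_and_cross_eq_iff {K : Type*} [Field K] {v w : Fin 3 → K} :
    (∃ g : SL(3, K), g 2 = v ∧ g 1 ⨯₃ g 2 = w) ↔ v ⬝ᵥ w = 0 ∧ v ≠ 0 ∧ w ≠ 0 := by
  constructor
  · rintro ⟨g, rfl, rfl⟩
    refine ⟨dot_cross_self _ _, g.row_ne_zero 2, fun hw => ?_⟩
    simpa [hw] using g.dotProduct_cross_eq_one
  · rintro ⟨hvw, hv, hw⟩
    obtain ⟨u, hu⟩ := exists_dotProduct_eq_one_of_ne_zero hv
    obtain ⟨p, hp⟩ := exists_dotProduct_eq_one_of_ne_zero hw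
    exact exists_row_two_eq_and_cross_eq hu hp hvw

end Matrix.SpecialLinearGroup

section Plucker

variable {R : Type*} [CommRing R]

def plucker (v w : Fin 3 → R) : Fin 6 → R :=
  ![-v 0, -v 1, -v 2, -w 2, -w 1, -w 0]

lemma plucker_inj {v w v' w' : Fin 3 → R} : plucker v w = plucker v' w' ↔ v = v' ∧ w = w' := by
  simp [plucker, funext_iff, Fin.forall_fin_succ]
  tauto

lemma exists_plucker_eq (x : Fin 6 → R) : ∃ v w, plucker v w = x :=
  ⟨![-x 0, -x 1, -x 2], ![-x 5, -x 4, -x 3], by ext i; fin_cases i <;> simp [plucker]⟩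

lemma plucker_relation (v w : Fin 3 → R) :
    plucker v w 0 * plucker v w 5 + plucker v w 1 * plucker v w 4 + plucker v w 2 * plucker v w 3 =
      v ⬝ᵥ w := by
  simp [plucker, vec3_dotProduct]

lemma plucker_fst_eq_zero_iff {v w : Fin 3 → R} :
    (plucker v w 0 = 0 ∧ plucker v w 1 = 0 ∧ plucker v w 2 = 0) ↔ v = 0 := by
  simp [plucker, funext_iff, Fin.forall_fin_succ]

lemma plucker_snd_eq_zero_iff {v w : Fin 3 → R} :
    (plucker v w 3 = 0 ∧ plucker v w 4 = 0 ∧ plucker v w 5 = 0) ↔ w = 0 := by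
  simp [plucker, funext_iff, Fin.forall_fin_succ]
  tauto

lemma RingHom.comp_plucker {S : Type*} [CommRing S] (f : R →+* S) (v w : Fin 3 → R) :
    f ∘ plucker v w = plucker (f ∘ v) (f ∘ w) := by
  ext i
  fin_cases i <;> simp [plucker]

end Plucker

lemma pluckerM_eq (g : Matrix (Fin 3) (Fin 3) ℝ) : pluckerM g = plucker (g 2) (g 1 ⨯₃ g 2) := by
  ext i
  fin_cases i <;> simp [pluckerM, plucker, cross_apply]

namespace isUniUpper

variable {n : Matrix (Fin 3) (Fin 3) ℝ}

lemma mul_row_two (hn : isUniUpper n) (g : Matrix (Fin 3) (Fin 3) ℝ) : (n * g) 2 = g 2 := by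
  obtain ⟨-, -, h22, -, h20, h21⟩ := hn
  ext j
  simp [mul_apply, Fin.sum_univ_three, h20, h21, h22]

lemma mul_row_one (hn : isUniUpper n) (g : Matrix (Fin 3) (Fin 3) ℝ) :
    (n * g) 1 = g 1 + n 1 2 • g 2 := by
  obtain ⟨-, h11, -, h10, -, -⟩ := hn
  ext j
  simp [mul_apply, Fin.sum_univ_three, h10, h11]

end isUniUpper

lemma isUniUpper_of_rows {n : SL(3, ℝ)} {t : ℝ} (h2 : n 2 = Pi.single 2 1)
    (h1 : n 1 = Pi.single 1 1 + t • Pi.single 2 1) : isUniUpper n := by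
  obtain ⟨h10, h11, -⟩ : n 1 0 = 0 ∧ n 1 1 = 1 ∧ n 1 2 = t := by
    simpa [Fin.forall_fin_succ] using congrFun h1
  obtain ⟨h20, h21, h22⟩ : n 2 0 = 0 ∧ n 2 1 = 0 ∧ n 2 2 = 1 := by
    simpa [Fin.forall_fin_succ] using congrFun h2
  have hdet := n.det_coe
  rw [det_fin_three, h10, h11, h20, h21, h22] at hdet
  exact ⟨by linear_combination hdet, h11, h22, h10, h20, h21⟩

lemma exists_isUniUpper_mul_eq_iff (g h : SL(3, ℝ)) :
    (∃ n : SL(3, ℝ), isUniUpper n ∧ n * g = h) ↔ g 2 = h 2 ∧ g 1 ⨯₃ g 2 = h 1 ⨯₃ h 2 := by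
  constructor
  · rintro ⟨n, hn, rfl⟩
    have h2 : (n * g) 2 = g 2 := hn.mul_row_two g
    have h1 : (n * g) 1 = g 1 + n 1 2 • g 2 := hn.mul_row_one g
    rw [h2, h1, add_smul_cross_self]
    exact ⟨rfl, rfl⟩
  · rintro ⟨h2, h1⟩
    obtain ⟨t, ht⟩ : ∃ t, h 1 - g 1 = t • g 2 :=
      exists_eq_smul_of_cross_eq_zero
        (by simp only [map_sub, LinearMap.sub_apply, ← h2, h1, sub_self]) (g.row_ne_zero 2)
    refine ⟨h * g⁻¹, isUniUpper_of_rows (t := t) ?_ ?_, inv_mul_cancel_right h g⟩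
    · rw [SpecialLinearGroup.row_mul_inv_eq_iff, single_one_vecMul]
      exact h2.symm
    · rw [SpecialLinearGroup.row_mul_inv_eq_iff, add_vecMul, smul_vecMul, single_one_vecMul,
        single_one_vecMul]
      exact sub_eq_iff_eq_add'.mp ht

lemma pluckerM_eq_plucker_iff (g : SL(3, ℝ)) {v w : Fin 3 → ℝ} :
    pluckerM g = plucker v w ↔ g 2 = v ∧ g 1 ⨯₃ g 2 = w := by
  rw [pluckerM_eq, plucker_inj]

lemma exists_isUniUpper_mul_eq_iff_pluckerM_eq (g h : SL(3, ℝ)) :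
    (∃ n : SL(3, ℝ), isUniUpper n ∧ n * g = h) ↔ pluckerM g = pluckerM h := by
  rw [exists_isUniUpper_mul_eq_iff, pluckerM_eq h, pluckerM_eq_plucker_iff]

lemma exists_pluckerM_eq_iff (x : Fin 6 → ℝ) :
    (∃ g : SL(3, ℝ), pluckerM g = x) ↔ x 0 * x 5 + x 1 * x 4 + x 2 * x 3 = 0 ∧
      ¬(x 0 = 0 ∧ x 1 = 0 ∧ x 2 = 0) ∧ ¬(x 3 = 0 ∧ x 4 = 0 ∧ x 5 = 0) := by
  obtain ⟨v, w, rfl⟩ := exists_plucker_eq x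
  rw [plucker_relation, plucker_fst_eq_zero_iff, plucker_snd_eq_zero_iff,
    ← SpecialLinearGroup.exists_row_two_eq_and_cross_eq_iff]
  simp only [pluckerM_eq_plucker_iff]

lemma pluckerM_map_intCast (γ : SL(3, ℤ)) :
    pluckerM (SpecialLinearGroup.map (Int.castRingHom ℝ) γ) =
      Int.castRingHom ℝ ∘ plucker (γ 2) (γ 1 ⨯₃ γ 2) := by
  rw [pluckerM_eq, (Int.castRingHom ℝ).comp_plucker, (Int.castRingHom ℝ).comp_cross]
  rfl

lemma exists_intCast_eq_and_gcd_eq_one_iff (x : Fin 6 → ℝ) :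
    (∃ a₁ b₁ c₁ a₂ b₂ c₂ : ℤ, x = ![(a₁ : ℝ), b₁, c₁, a₂, b₂, c₂] ∧
        Int.gcd a₁ (Int.gcd b₁ c₁) = 1 ∧ Int.gcd a₂ (Int.gcd b₂ c₂) = 1) ↔
      ∃ v w : Fin 3 → ℤ, x = Int.castRingHom ℝ ∘ plucker v w ∧ (∃ u, u ⬝ᵥ v = 1) ∧
        ∃ p, p ⬝ᵥ w = 1 := by
  constructor
  · rintro ⟨a₁, b₁, c₁, a₂, b₂, c₂, rfl, h₁, h₂⟩
    obtain ⟨x, y, z, hxyz⟩ := Int.gcd_gcd_eq_one_iff.mp h₁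
    obtain ⟨x', y', z', hxyz'⟩ := Int.gcd_gcd_eq_one_iff.mp h₂
    refine ⟨![-a₁, -b₁, -c₁], ![-c₂, -b₂, -a₂], ?_, ⟨![-x, -y, -z], ?_⟩, ![-z', -y', -x'], ?_⟩
    · ext i
      fin_cases i <;> simp [plucker]
    · simp only [vec3_dotProduct, cons_val]
      linear_combination hxyz
    · simp only [vec3_dotProduct, cons_val]
      linear_combination hxyz'
  · rintro ⟨v, w, rfl, ⟨u, hu⟩, p, hp⟩
    rw [vec3_dotProduct] at hu hp
    refine ⟨-v 0, -v 1, -v 2, -w 2, -w 1, -w 0, ?_,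
      Int.gcd_gcd_eq_one_iff.mpr ⟨-u 0, -u 1, -u 2, ?_⟩,
      Int.gcd_gcd_eq_one_iff.mpr ⟨-p 2, -p 1, -p 0, ?_⟩⟩
    · ext i
      fin_cases i <;> simp [plucker]
    · linear_combination hu
    · linear_combination hp

lemma exists_isUniUpper_mul_eq_intCast_iff (g : SL(3, ℝ)) :
    (∃ γ : SL(3, ℤ), ∃ n : SL(3, ℝ),
        isUniUpper n ∧ n * g = SpecialLinearGroup.map (Int.castRingHom ℝ) γ) ↔
      ∃ v w : Fin 3 → ℤ, pluckerM g = Int.castRingHom ℝ ∘ plucker v w ∧ (∃ u, u ⬝ᵥ v = 1) ∧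
        ∃ p, p ⬝ᵥ w = 1 := by
  simp only [exists_isUniUpper_mul_eq_iff_pluckerM_eq, pluckerM_map_intCast]
  constructor
  · rintro ⟨γ, hγ⟩
    exact ⟨γ 2, γ 1 ⨯₃ γ 2, hγ, γ.exists_dotProduct_row_two_eq_one, γ 0, γ.dotProduct_cross_eq_one⟩
  · rintro ⟨v, w, hg, ⟨u, hu⟩, p, hp⟩
    have hvw : v ⬝ᵥ w = 0 := by
      obtain ⟨hv, hw⟩ :=
        (pluckerM_eq_plucker_iff g).mp (hg.trans ((Int.castRingHom ℝ).comp_plucker v w))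
      apply Int.cast_injective (α := ℝ)
      rw [Int.cast_zero, ← eq_intCast (Int.castRingHom ℝ), RingHom.map_dotProduct, ← hv, ← hw,
        dot_cross_self]
    obtain ⟨γ, rfl, rfl⟩ := SpecialLinearGroup.exists_row_two_eq_and_cross_eq hu hp hvw
    exact ⟨γ, hg⟩

/-- The Plücker coordinates induce a bijection `N\\SL(3,ℝ) ↔ {(A₁,B₁,C₁,A₂,B₂,C₂) :
A₁C₂ + B₁B₂ + C₁A₂ = 0, (A₁,B₁,C₁) ≠ 0, (A₂,B₂,C₂) ≠ 0}`, and a coset `Ng` contains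
an element of `SL(3,ℤ)` iff the coordinates are integral with the two gcd conditions. -/
theorem plucker_coordinates_parametrize_cosets :
    (∀ g h : Matrix.SpecialLinearGroup (Fin 3) ℝ,
      (∃ n : Matrix.SpecialLinearGroup (Fin 3) ℝ,
          isUniUpper (n : Matrix (Fin 3) (Fin 3) ℝ) ∧ n * g = h) ↔
        pluckerM (g : Matrix (Fin 3) (Fin 3) ℝ) = pluckerM (h : Matrix (Fin 3) (Fin 3) ℝ)) ∧
    (∀ v : Fin 6 → ℝ,
      (v 0 * v 5 + v 1 * v 4 + v 2 * v 3 = 0 ∧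
        ¬(v 0 = 0 ∧ v 1 = 0 ∧ v 2 = 0) ∧ ¬(v 3 = 0 ∧ v 4 = 0 ∧ v 5 = 0)) ↔
        ∃ g : Matrix.SpecialLinearGroup (Fin 3) ℝ,
          pluckerM (g : Matrix (Fin 3) (Fin 3) ℝ) = v) ∧
    (∀ g : Matrix.SpecialLinearGroup (Fin 3) ℝ,
      (∃ γ : Matrix.SpecialLinearGroup (Fin 3) ℤ,
        ∃ n : Matrix.SpecialLinearGroup (Fin 3) ℝ,
          isUniUpper (n : Matrix (Fin 3) (Fin 3) ℝ) ∧
            n * g = Matrix.SpecialLinearGroup.map (Int.castRingHom ℝ) γ) ↔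
      (∃ a₁ b₁ c₁ a₂ b₂ c₂ : ℤ,
        pluckerM (g : Matrix (Fin 3) (Fin 3) ℝ) = ![(a₁ : ℝ), b₁, c₁, a₂, b₂, c₂] ∧
        Int.gcd a₁ (Int.gcd b₁ c₁) = 1 ∧ Int.gcd a₂ (Int.gcd b₂ c₂) = 1)) :=
  ⟨exists_isUniUpper_mul_eq_iff_pluckerM_eq, fun x => (exists_pluckerM_eq_iff x).symm,
    fun g => (exists_isUniUpper_mul_eq_intCast_iff g).trans
      (exists_intCast_eq_and_gcd_eq_one_iff _).symm⟩
end

section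
/- Let g ∈ SL(3,ℝ) have Plücker coordinates (A₁,B₁,C₁,A₂,B₂,C₂), let x,y,z ∈ ℝ, let n = n(x,y,z) be the upper unitriangular matrix with (1,2)-entry x, (2,3)-entry y, (1,3)-entry z, and let S₂ = diag(1,−1,1), S₃ = diag(1,1,−1), and w_ℓ = [[0,0,1],[0,−1,0],[1,0,0]]. Then: (1) n·g·n⁻¹ has Plücker coordinates (A₁, B₁−A₁x, C₁−B₁y+A₁(xy−z), A₂, B₂+A₂y, C₂+B₂x+A₂z); (2) S₃·g·S₃⁻¹ has Plücker coordinates (−A₁,−B₁,C₁,−A₂,B₂,C₂); (3) S₂·g·S₂⁻¹ has Plücker coordinates (A₁,−B₁,C₁,A₂,−B₂,C₂); (4) w_ℓ·ᵀg⁻¹·w_ℓ has Plücker coordinates (A₂,−B₂,C₂,A₁,−B₁,C₁), where ᵀg⁻¹ denotes the transpose of the inverse of g. -/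
lemma cons_val_five' {α : Type*} (x0 x1 x2 x3 x4 x5 : α) :
    ![x0, x1, x2, x3, x4, x5] (5 : Fin 6) = x5 := rfl

set_option maxHeartbeats 1600000 in
/-- Symmetries of the Plücker coordinates under conjugation by `n(x,y,z)`, `S₃`, `S₂`,
and under `g ↦ wₗ ᵀg⁻¹ wₗ`. -/
theorem plucker_symmetries (g : Matrix (Fin 3) (Fin 3) ℝ) (hg : g.det = 1)
    (A₁ B₁ C₁ A₂ B₂ C₂ : ℝ) (hpl : pluckerM g = ![A₁, B₁, C₁, A₂, B₂, C₂])
    (x y z : ℝ) :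
    pluckerM (!![1, x, z; 0, 1, y; 0, 0, 1] * g * (!![1, x, z; 0, 1, y; 0, 0, 1])⁻¹) =
      ![A₁, B₁ - A₁ * x, C₁ - B₁ * y + A₁ * (x * y - z), A₂, B₂ + A₂ * y,
        C₂ + B₂ * x + A₂ * z] ∧
    pluckerM (!![(1 : ℝ), 0, 0; 0, 1, 0; 0, 0, -1] * g *
        (!![(1 : ℝ), 0, 0; 0, 1, 0; 0, 0, -1])⁻¹) =
      ![-A₁, -B₁, C₁, -A₂, B₂, C₂] ∧
    pluckerM (!![(1 : ℝ), 0, 0; 0, -1, 0; 0, 0, 1] * g *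
        (!![(1 : ℝ), 0, 0; 0, -1, 0; 0, 0, 1])⁻¹) =
      ![A₁, -B₁, C₁, A₂, -B₂, C₂] ∧
    pluckerM (!![(0 : ℝ), 0, 1; 0, -1, 0; 1, 0, 0] * (g⁻¹).transpose *
        !![(0 : ℝ), 0, 1; 0, -1, 0; 1, 0, 0]) =
      ![A₂, -B₂, C₂, A₁, -B₁, C₁] := by
  obtain ⟨a, b, c, d, e, f, p, q, r, rfl⟩ :
      ∃ a b c d e f p q r, g = !![a, b, c; d, e, f; p, q, r] :=
    ⟨_, _, _, _, _, _, _, _, _, by ext i j; fin_cases i <;> fin_cases j <;> rfl⟩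
  rw [funext_iff] at hpl
  simp only [Fin.forall_fin_succ, pluckerM, Matrix.cons_val_zero, Matrix.cons_val_succ,
    Matrix.cons_val_one, Matrix.head_cons, Matrix.cons_val_two, Matrix.tail_cons,
    IsEmpty.forall_iff, and_true] at hpl
  obtain ⟨h0, h1, h2, h3, h4, h5⟩ := hpl
  subst h0 h1 h2 h3 h4 h5
  simp [Matrix.det_fin_three] at hg
  have hN : (!![1, x, z; 0, 1, y; 0, 0, 1] : Matrix (Fin 3) (Fin 3) ℝ)⁻¹ =
      !![1, -x, x * y - z; 0, 1, -y; 0, 0, 1] := by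
    apply Matrix.inv_eq_right_inv
    rw [Matrix.mul_fin_three, Matrix.one_fin_three]
    ext i j; fin_cases i <;> fin_cases j <;> simp <;> ring
  have hS₃ : (!![(1 : ℝ), 0, 0; 0, 1, 0; 0, 0, -1])⁻¹ =
      !![(1 : ℝ), 0, 0; 0, 1, 0; 0, 0, -1] := by
    apply Matrix.inv_eq_right_inv
    rw [Matrix.mul_fin_three, Matrix.one_fin_three]
    norm_num
  have hS₂ : (!![(1 : ℝ), 0, 0; 0, -1, 0; 0, 0, 1])⁻¹ =
      !![(1 : ℝ), 0, 0; 0, -1, 0; 0, 0, 1] := by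
    apply Matrix.inv_eq_right_inv
    rw [Matrix.mul_fin_three, Matrix.one_fin_three]
    norm_num
  have hinv : ((!![a, b, c; d, e, f; p, q, r] : Matrix (Fin 3) (Fin 3) ℝ)⁻¹).transpose =
      !![e*r - f*q, -(d*r - f*p), d*q - e*p;
         -(b*r - c*q), a*r - c*p, -(a*q - b*p);
         b*f - c*e, -(a*f - c*d), a*e - b*d] := by
    have h1 : (!![a, b, c; d, e, f; p, q, r] : Matrix (Fin 3) (Fin 3) ℝ)⁻¹ =
        !![e*r - f*q, -(b*r - c*q), b*f - c*e;
           -(d*r - f*p), a*r - c*p, -(a*f - c*d);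
           d*q - e*p, -(a*q - b*p), a*e - b*d] := by
      apply Matrix.inv_eq_right_inv
      rw [Matrix.mul_fin_three, Matrix.one_fin_three]
      ext i j; fin_cases i <;> fin_cases j <;> simp [Matrix.vecHead, Matrix.vecTail] <;>
        first | ring1 | linear_combination hg | linear_combination -hg
    rw [h1]
    ext i j; fin_cases i <;> fin_cases j <;> rfl
  refine ⟨?_, ?_, ?_, ?_⟩ <;>
    [rw [hN]; rw [hS₃]; rw [hS₂]; rw [hinv]] <;>
    rw [Matrix.mul_fin_three, Matrix.mul_fin_three] <;>
    funext i <;> fin_cases i <;>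
    simp [pluckerM, Matrix.vecHead, Matrix.vecTail, cons_val_five'] <;>
    first
      | ring1 | linear_combination hg | linear_combination -hg
      | linear_combination (-p) * hg | linear_combination q * hg
      | linear_combination (-r) * hg
end

section
/- For every complex number s with Re(s) > 3/2, ∑_{k=1}^{∞} (φ(4k²)/2)·(2k)^{−2s} = 2^{−2s} · ζ(2s−2) / ζ₂(2s−1), where ζ is the Riemann zeta function and ζ₂(w) = ζ(w)·(1−2^{−w}). Equivalently, this sum equals (2^{−2s}/(1−2^{−(2s−2)})) · ∏_{p odd prime} (1−p^{1−2s})/(1−p^{2−2s}). -/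
/-!
Put `w = 2s - 1`. Since `φ(n²) = n φ(n)`, the `k`-th term equals `φ(2k) (2k)^{-w} / 2`, so the
sum is half the even part `E` of `L(φ, w)`, which is `ζ(w - 1) / ζ(w)` because `∑_{d ∣ n} φ(d) = n`.
As `φ(2n)` is `2φ(n)` for even `n` and `φ(n)` for odd `n`, splitting `E` once more by parity gives
`E = 2^{-w} (E + L(φ, w))`. The Euler product form comes from the Euler product of the `L`-series
of the trivial character mod 2, which is `ζ(z)(1 - 2^{-z})` and has trivial factor at `p = 2`.
-/

open Complex LSeries
open scoped LSeries.notation Nat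

lemma tsum_two_mul_eq_of_doubling {𝕜 : Type*} [NormedField 𝕜] [CompleteSpace 𝕜] {g : ℕ → 𝕜}
    {c : 𝕜} (hg : Summable g) (h : ∀ n, g (2 * n) = c * (if Even n then 2 else 1) * g n) :
    (1 - c) * ∑' n, g (2 * n) = c * ∑' n, g n := by
  have hg_even : Summable fun n ↦ g (2 * n) := hg.comp_injective fun a b hab ↦ by simpa using hab
  have hg_odd : Summable fun n ↦ g (2 * n + 1) := hg.comp_injective fun a b hab ↦ by simpa using hab
  have h_even_even : ∀ n, g (2 * (2 * n)) = 2 * c * g (2 * n) := fun n ↦ by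
    rw [h, if_pos (even_two_mul n)]; ring
  have h_even_odd : ∀ n, g (2 * (2 * n + 1)) = c * g (2 * n + 1) := fun n ↦ by
    rw [h, if_neg (Nat.not_even_iff_odd.mpr (odd_two_mul_add_one n)), mul_one]
  have hsplit := tsum_even_add_odd hg_even hg_odd
  have hsplit_even := tsum_even_add_odd (f := fun n ↦ g (2 * n))
    (by simpa only [h_even_even] using hg_even.mul_left (2 * c))
    (by simpa only [h_even_odd] using hg_odd.mul_left c)
  simp only [h_even_even, h_even_odd, tsum_mul_left] at hsplit_even
  -- `E = 2cE + cO` and `E + O = ∑ g`, where `E`, `O` are the even and odd parts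
  linear_combination c * hsplit - hsplit_even

theorem Nat.totient_mul_self (n : ℕ) : φ (n * n) = n * φ n := by
  rcases Nat.eq_zero_or_pos n with rfl | hn
  · simp
  have h := Nat.totient_gcd_mul_totient_mul n n
  rw [Nat.gcd_self] at h
  exact Nat.eq_of_mul_eq_mul_left (Nat.totient_pos.mpr hn) (by rw [h]; ring)

lemma LSeries.term_totient_eq_totient_sq_mul_cpow (s : ℂ) (n : ℕ) :
    term ↗φ (2 * s - 1) n = φ (n ^ 2) * (n : ℂ) ^ (-2 * s) := by
  rcases eq_or_ne n 0 with rfl | hn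
  · simp
  have hn' : (n : ℂ) ≠ 0 := Nat.cast_ne_zero.mpr hn
  rw [term_of_ne_zero hn, sq, Nat.totient_mul_self, Nat.cast_mul, div_eq_mul_inv,
    ← cpow_neg, neg_sub, sub_eq_add_neg, cpow_add _ _ hn', cpow_one, neg_mul]
  ring

lemma LSeries.term_totient_two_mul (w : ℂ) (n : ℕ) :
    term ↗φ w (2 * n) = 2 ^ (-w) * (if Even n then 2 else 1) * term ↗φ w n := by
  rcases eq_or_ne n 0 with rfl | hn
  · simp
  have htot : (φ (2 * n) : ℂ) = (if Even n then 2 else 1) * φ n := by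
    split_ifs with h
    · exact_mod_cast Nat.totient_two_mul_of_even h
    · rw [Nat.totient_two_mul_of_odd (Nat.not_even_iff_odd.mp h), one_mul]
  rw [term_of_ne_zero (mul_ne_zero two_ne_zero hn), term_of_ne_zero hn, Nat.cast_mul,
    natCast_mul_natCast_cpow, htot, cpow_neg, Nat.cast_ofNat]
  ring

lemma LSeriesSummable_totient {w : ℂ} (hw : 2 < w.re) : LSeriesSummable ↗φ w := by
  refine LSeriesSummable_of_le_const_mul_rpow (x := 2) hw ⟨1, fun n _ ↦ ?_⟩
  rw [norm_natCast, one_mul, show (2 : ℝ) - 1 = 1 by norm_num, Real.rpow_one]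
  exact_mod_cast Nat.totient_le n

lemma LSeries_natCast {w : ℂ} (hw : 2 < w.re) :
    L (fun n : ℕ ↦ (n : ℂ)) w = riemannZeta (w - 1) := by
  rw [← LSeries_one_eq_riemannZeta (by rw [sub_re, one_re]; linarith)]
  refine tsum_congr fun n ↦ ?_
  rcases eq_or_ne n 0 with rfl | hn
  · simp
  have hn' : (n : ℂ) ≠ 0 := Nat.cast_ne_zero.mpr hn
  rw [term_of_ne_zero hn, term_of_ne_zero hn, Pi.one_apply, cpow_sub _ _ hn', cpow_one,
    one_div_div]

lemma totient_convolution_one : ↗φ ⍟ 1 = fun n : ℕ ↦ (n : ℂ) := by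
  funext n
  simp only [LSeries.convolution_def, Pi.one_apply, mul_one]
  rw [Nat.sum_divisorsAntidiagonal fun a _ ↦ (φ a : ℂ)]
  exact_mod_cast Nat.sum_totient n

lemma LSeries_totient {w : ℂ} (hw : 2 < w.re) :
    L ↗φ w = riemannZeta (w - 1) / riemannZeta w := by
  have hw1 : 1 < w.re := by linarith
  rw [eq_div_iff (riemannZeta_ne_zero_of_one_lt_re hw1), ← LSeries_one_eq_riemannZeta hw1,
    ← LSeries_natCast hw, ← totient_convolution_one,
    LSeries_convolution' (LSeriesSummable_totient hw) (LSeriesSummable_one_iff.mpr hw1)]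

lemma LSeries_trivChar_two {z : ℂ} (hz : 1 < z.re) :
    L ↗(1 : DirichletCharacter ℂ 2) z = riemannZeta z * (1 - 2 ^ (-z)) := by
  rw [← DirichletCharacter.LFunction_eq_LSeries _ hz]
  refine (DirichletCharacter.LFunctionTrivChar_eq_mul_riemannZeta (N := 2) ?_).trans ?_
  · rintro rfl
    simp at hz
  · rw [Nat.prime_two.primeFactors, Finset.prod_singleton, mul_comm, Nat.cast_ofNat]

lemma riemannZeta_mul_one_sub_two_cpow_ne_zero {z : ℂ} (hz : 1 < z.re) :
    riemannZeta z * (1 - 2 ^ (-z)) ≠ 0 :=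
  LSeries_trivChar_two hz ▸ DirichletCharacter.LSeries_ne_zero_of_one_lt_re _ hz

lemma hasProd_odd_primes_inv_one_sub_cpow {z : ℂ} (hz : 1 < z.re) :
    HasProd (fun p : {p : ℕ // p.Prime ∧ p ≠ 2} ↦ (1 - (p : ℂ) ^ (-z))⁻¹)
      (riemannZeta z * (1 - 2 ^ (-z))) := by
  set χ : DirichletCharacter ℂ 2 := 1
  have h := DirichletCharacter.LSeries_eulerProduct_hasProd χ hz
  rw [LSeries_trivChar_two hz] at h
  have hsupp : Function.mulSupport (fun p : Nat.Primes ↦ (1 - χ p * (p : ℂ) ^ (-z))⁻¹) ⊆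
      {p | (p : ℕ) ≠ 2} := by
    rintro p hp (h2 : (p : ℕ) = 2)
    simp only [h2, Function.mem_mulSupport] at hp
    exact hp (by rw [ZMod.natCast_self, χ.map_zero, zero_mul, sub_zero, inv_one])
  let e : {p : ℕ // p.Prime ∧ p ≠ 2} ≃ {p : Nat.Primes // (p : ℕ) ≠ 2} :=
    ⟨fun p ↦ ⟨⟨p, p.2.1⟩, p.2.2⟩, fun p ↦ ⟨p.1, p.1.2, p.2⟩, fun _ ↦ rfl, fun _ ↦ rfl⟩
  refine (e.hasProd_iff.mpr ((hasProd_subtype_iff_of_mulSupport_subset hsupp).mpr h)).congr_fun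
    fun p ↦ ?_
  have hodd : ((p : ℕ) : ZMod 2) = 1 :=
    ZMod.natCast_eq_one_iff_odd.mpr (p.2.1.odd_of_ne_two p.2.2)
  change (1 - (p : ℂ) ^ (-z))⁻¹ = (1 - χ (p : ℕ) * (p : ℂ) ^ (-z))⁻¹
  rw [hodd, map_one, one_mul]

lemma hasProd_odd_primes_one_sub_cpow_div {z₁ z₂ : ℂ} (h₁ : 1 < z₁.re) (h₂ : 1 < z₂.re) :
    HasProd (fun p : {p : ℕ // p.Prime ∧ p ≠ 2} ↦ (1 - (p : ℂ) ^ (-z₁)) / (1 - (p : ℂ) ^ (-z₂)))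
      (riemannZeta z₂ * (1 - 2 ^ (-z₂)) / (riemannZeta z₁ * (1 - 2 ^ (-z₁)))) :=
  ((hasProd_odd_primes_inv_one_sub_cpow h₂).div₀ (hasProd_odd_primes_inv_one_sub_cpow h₁)
    (riemannZeta_mul_one_sub_two_cpow_ne_zero h₁)).congr_fun fun _ ↦ (inv_div_inv _ _).symm

lemma tsum_term_totient_two_mul {w : ℂ} (hw : 2 < w.re) :
    ∑' n, term ↗φ w (2 * n) =
      2 ^ (-w) * riemannZeta (w - 1) / (riemannZeta w * (1 - 2 ^ (-w))) := by
  have hD := riemannZeta_mul_one_sub_two_cpow_ne_zero (z := w) (by linarith)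
  have h := tsum_two_mul_eq_of_doubling (LSeriesSummable_totient hw) (term_totient_two_mul w)
  rw [show ∑' n, term ↗φ w n = _ from LSeries_totient hw] at h
  have hζ := left_ne_zero_of_mul hD
  rw [eq_div_iff hD]
  field_simp at h
  linear_combination h

/-- `∑_{k≥1} (φ(4k²)/2)(2k)^{-2s} = 2^{-2s} ζ(2s-2)/ζ₂(2s-1)`, where
`ζ₂(w) = ζ(w)(1-2^{-w})`; equivalently it equals
`(2^{-2s}/(1-2^{-(2s-2)})) · ∏_{p odd prime} (1-p^{1-2s})/(1-p^{2-2s})`. -/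
theorem totient_square_dirichlet_series (s : ℂ) (hs : 3 / 2 < s.re) :
    (∑' k : ℕ+, ((Nat.totient (4 * (k : ℕ) ^ 2) : ℂ) / 2) * ((2 * (k : ℕ) : ℂ) ^ (-2 * s)))
        = 2 ^ (-2 * s) * riemannZeta (2 * s - 2) /
            (riemannZeta (2 * s - 1) * (1 - 2 ^ (-(2 * s - 1)))) ∧
    (∑' k : ℕ+, ((Nat.totient (4 * (k : ℕ) ^ 2) : ℂ) / 2) * ((2 * (k : ℕ) : ℂ) ^ (-2 * s)))
        = (2 ^ (-2 * s) / (1 - 2 ^ (-(2 * s - 2)))) *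
            ∏' p : {p : ℕ // p.Prime ∧ p ≠ 2},
              (1 - ((p : ℕ) : ℂ) ^ (1 - 2 * s)) / (1 - ((p : ℕ) : ℂ) ^ (2 - 2 * s)) := by
  have h₁ : 2 < (2 * s - 1).re := by simpa using show 2 < 2 * s.re - 1 by linarith
  have h₂ : 1 < (2 * s - 2).re := by simpa using show 1 < 2 * s.re - 2 by linarith
  have hfirst : ∑' k : ℕ+, ((φ (4 * (k : ℕ) ^ 2) : ℂ) / 2) * ((2 * (k : ℕ) : ℂ) ^ (-2 * s))
      = 2 ^ (-2 * s) * riemannZeta (2 * s - 2) /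
            (riemannZeta (2 * s - 1) * (1 - 2 ^ (-(2 * s - 1)))) := by
    rw [tsum_pnat_eq_tsum_of_eq_zero
      (f := fun n ↦ ((φ (4 * n ^ 2) : ℂ) / 2) * ((2 * n : ℂ) ^ (-2 * s))) (by simp)]
    have hterm (n : ℕ) : ((φ (4 * n ^ 2) : ℂ) / 2) * ((2 * n : ℂ) ^ (-2 * s)) =
        term ↗φ (2 * s - 1) (2 * n) / 2 := by
      rw [term_totient_eq_totient_sq_mul_cpow, mul_pow]
      push_cast
      ring
    rw [tsum_congr hterm, tsum_div_const, tsum_term_totient_two_mul h₁,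
      show 2 * s - 1 - 1 = 2 * s - 2 by ring,
      show -(2 * s - 1) = 1 + -2 * s by ring, cpow_add _ _ two_ne_zero, cpow_one]
    ring
  refine ⟨hfirst, ?_⟩
  rw [hfirst, ← neg_sub (2 * s) 1, ← neg_sub (2 * s) 2,
    (hasProd_odd_primes_one_sub_cpow_div (by linarith) h₂).tprod_eq]
  have hq := right_ne_zero_of_mul (riemannZeta_mul_one_sub_two_cpow_ne_zero h₂)
  rw [div_mul_div_comm, ← mul_assoc, mul_comm (1 - 2 ^ (-(2 * s - 2))),
    mul_div_mul_right _ _ hq]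
end

section
/- Let κ ∈ ℤ and let n be a positive integer. Then K_κ(0; 4n) = 0 if n is not a perfect square, and K_κ(0; 4n) = (1 + i^{−κ})·φ(4n)/2 if n is a perfect square. -/
/-- The Kronecker symbol at a prime `p`. -/
def kronPrime (a : ℤ) (p : ℕ) : ℤ :=
  if p = 2 then (if a % 2 = 0 then 0 else if a % 8 = 1 ∨ a % 8 = 7 then 1 else -1)
  else jacobiSym a p

/-- The Kronecker symbol `(a/n)`. -/
def kron (a n : ℤ) : ℤ :=
  if n = 0 then (if a = 1 ∨ a = -1 then 1 else 0)
  else (if a < 0 ∧ n < 0 then -1 else 1) *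
    n.natAbs.factorization.prod fun p e => kronPrime a p ^ e

/-- `e2pi r = exp(2πir)`. -/
noncomputable def e2pi (r : ℚ) : ℂ :=
  Complex.exp (2 * Real.pi * Complex.I * (r : ℂ))

/-- `ε_d` for odd `d`: `1` if `d ≡ 1 (mod 4)` and `i` if `d ≡ 3 (mod 4)`. -/
noncomputable def epsd (d : ℕ) : ℂ := if d % 4 = 1 then 1 else Complex.I

/-- The Kloosterman-type sum `K_κ(m; 4c)`. -/
noncomputable def Kl (κ : ℤ) (m : ℤ) (c : ℕ) : ℂ :=
  ∑ d ∈ Finset.filter (fun d => ¬ 2 ∣ d) (Finset.range (4 * c)),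
    epsd d ^ (-κ) * (kron (4 * (c : ℤ)) (d : ℤ) : ℂ) *
      e2pi ((m : ℚ) * (d : ℚ) / (4 * (c : ℚ)))

/-!
For odd `d` the Kronecker symbol `(4n/d)` is the Jacobi symbol `(n/d)`, and
`ε_d^{-κ} = ((1 + i^{-κ}) + (1 - i^{-κ}) χ₄(d)) / 2` with `χ₄(d) (n/d) = (-n/d)`. Hence
`K_κ(0; 4n)` is a combination of the sums `∑_{d odd mod 4|m|} (m/d)` for `m = ±n`.
Up to the terms with `gcd(d, m) > 1`, which vanish, such a sum runs over `(ℤ/4|m|ℤ)ˣ`, on which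
`d ↦ (m/d)` is a homomorphism; so it equals `φ(4|m|)` or `0` according as the homomorphism is
trivial or not. It is trivial exactly when `m` is a square (and `-n` never is): for a nonsquare
`m` write `m = b² a` with `a` squarefree; if an odd prime `q` divides `a`, the Chinese remainder
theorem and reciprocity give an odd `r` with `(a/r) = -1`, and otherwise `a ∈ {-1, ±2}`.
Dirichlet's theorem then replaces `r` by a prime `p ≡ r (mod 4|a|)` as large as we like, hence
coprime to `b` and to `4m`.
-/

open Finset NumberTheorySymbols

theorem Nat.coprime_four_mul_iff {d k : ℕ} : d.Coprime (4 * k) ↔ Odd d ∧ d.Coprime k := by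
  rw [Nat.coprime_mul_iff_right, show 4 = 2 ^ 2 by rfl, Nat.coprime_pow_right_iff two_pos,
    Nat.coprime_two_right]

theorem jacobiSym.eq_of_modEq_right (a : ℤ) {b c : ℕ} (hb : Odd b)
    (h : b ≡ c [MOD 4 * a.natAbs]) : J(a | b) = J(a | c) := by
  have hc : Odd c := by
    have h4 : b % 4 = c % 4 := h.of_dvd (dvd_mul_right 4 _)
    rw [Nat.odd_iff] at hb ⊢
    omega
  rw [jacobiSym.mod_right a hb, jacobiSym.mod_right a hc, h]

theorem exists_odd_jacobiSym_prime_mul_eq_neg_one {q : ℕ} [hq : Fact q.Prime] (hq2 : q ≠ 2)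
    {b : ℤ} (hqb : ¬ (q : ℤ) ∣ b) : ∃ r : ℕ, Odd r ∧ J(q * b | r) = -1 := by
  obtain ⟨x, hx⟩ := FiniteField.exists_nonsquare (F := ZMod q) (by rwa [ZMod.ringChar_zmod_n])
  have hxq : J(x.val | q) = -1 := by
    rw [← jacobiSym.legendreSym.to_jacobiSym, legendreSym.eq_neg_one_iff', ZMod.natCast_zmod_val]
    exact hx
  have hqodd : Odd q := hq.out.odd_of_ne_two hq2
  have hcop : q.Coprime (4 * b.natAbs) :=
    Nat.coprime_four_mul_iff.2 ⟨hqodd, hq.out.coprime_iff_not_dvd.2 (Int.natCast_dvd.not.1 hqb)⟩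
  obtain ⟨r, hrq, hrb⟩ := Nat.chineseRemainder hcop x.val 1
  have hr4 : r % 4 = 1 := (hrb.of_dvd (dvd_mul_right 4 _) :)
  have hr : Odd r := Nat.odd_iff.2 (by omega)
  refine ⟨r, hr, ?_⟩
  rw [jacobiSym.mul_left, ← jacobiSym.quadratic_reciprocity_one_mod_four hr4 hqodd,
    jacobiSym.mod_left' (Int.natCast_modEq_iff.2 hrq), hxq, jacobiSym.eq_of_modEq_right b hr hrb,
    jacobiSym.one_right, mul_one]

theorem Int.natAbs_dvd_two_of_squarefree {a : ℤ} (ha : Squarefree a)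
    (h : ∀ q : ℕ, q.Prime → (q : ℤ) ∣ a → q = 2) : a.natAbs ∣ 2 := by
  rw [← Nat.prod_primeFactors_of_squarefree (Int.squarefree_natAbs.2 ha)]
  refine (Finset.prod_dvd_prod_of_subset _ {2} id fun q hq => ?_).trans (by simp)
  rw [Nat.mem_primeFactors] at hq
  exact Finset.mem_singleton.2 (h q hq.1 (Int.natCast_dvd.2 hq.2.1))

theorem exists_odd_jacobiSym_eq_neg_one_of_squarefree {a : ℤ} (ha : Squarefree a)
    (hns : ¬ IsSquare a) : ∃ r : ℕ, Odd r ∧ J(a | r) = -1 := by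
  by_cases h : ∃ q : ℕ, q.Prime ∧ q ≠ 2 ∧ (q : ℤ) ∣ a
  · obtain ⟨q, hq, hq2, b, rfl⟩ := h
    have := Fact.mk hq
    refine exists_odd_jacobiSym_prime_mul_eq_neg_one hq2 fun hqb => ?_
    exact hq.not_isUnit (Int.ofNat_isUnit.1 (ha _ (mul_dvd_mul_left _ hqb)))
  · push Not at h
    have h2 := Int.natAbs_dvd_two_of_squarefree ha fun q hq hqa =>
      by_contra fun hq2 => h q hq hq2 hqa
    rcases (Nat.dvd_prime Nat.prime_two).1 h2 with hA | hA <;>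
      rcases Int.natAbs_eq a with ha' | ha' <;> rw [ha', hA] at hns ⊢
    · exact absurd ⟨1, rfl⟩ hns
    · exact ⟨3, by decide, by norm_num⟩
    · exact ⟨5, by decide, by norm_num⟩
    · exact ⟨5, by decide, by norm_num⟩

theorem exists_prime_gt_jacobiSym_eq_neg_one_of_odd {a : ℤ} {r : ℕ} (hr : Odd r)
    (h : J(a | r) = -1) (n : ℕ) : ∃ p > n, p.Prime ∧ J(a | p) = -1 := by
  have ha : a ≠ 0 := by
    rintro rfl
    rcases Nat.lt_or_ge 1 r with hr1 | hr1
    · rw [jacobiSym.zero_left hr1] at h; norm_num at h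
    · obtain rfl : r = 1 := by have := hr.pos; omega
      rw [jacobiSym.one_right] at h; norm_num at h
  have hgcd : a.gcd r = 1 := by
    have : NeZero r := ⟨hr.pos.ne'⟩
    by_contra hg
    rw [jacobiSym.eq_zero_iff_not_coprime.2 hg] at h
    norm_num at h
  have hcop : IsCoprime (r : ℤ) ((4 * a.natAbs : ℕ) : ℤ) := by
    rw [Nat.isCoprime_iff_coprime, Nat.coprime_four_mul_iff, Nat.coprime_comm]
    exact ⟨hr, hgcd⟩
  obtain ⟨p, hpn, hp, hpr⟩ := Nat.forall_exists_prime_gt_and_zmodEq n (by positivity) hcop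
  refine ⟨p, hpn, hp, ?_⟩
  rw [← h, jacobiSym.eq_of_modEq_right a hr (Int.natCast_modEq_iff.1 hpr.symm)]

theorem exists_prime_gt_jacobiSym_eq_neg_one {m : ℤ} (hm : ¬ IsSquare m) (n : ℕ) :
    ∃ p > n, p.Prime ∧ J(m | p) = -1 := by
  have hm0 : m ≠ 0 := fun h => hm (h ▸ IsSquare.zero)
  obtain ⟨a, b, hab, ha⟩ := Nat.sq_mul_squarefree m.natAbs
  have hb : b ≠ 0 := by
    rintro rfl
    exact Int.natAbs_ne_zero.2 hm0 (by simpa using hab.symm)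
  have hm_eq : m = (b : ℤ) ^ 2 * (m.sign * a) := by
    rw [mul_left_comm, ← Int.natCast_pow, ← Nat.cast_mul, hab, Int.sign_mul_natAbs]
  have hsf : Squarefree (m.sign * a : ℤ) := by
    rwa [← Int.squarefree_natAbs, Int.natAbs_mul, Int.natAbs_sign_of_ne_zero hm0, one_mul,
      Int.natAbs_natCast]
  have hns : ¬ IsSquare (m.sign * a : ℤ) := fun ⟨c, hc⟩ =>
    hm ⟨b * c, by rw [hm_eq, hc]; ring⟩
  obtain ⟨r, hr, hJ⟩ := exists_odd_jacobiSym_eq_neg_one_of_squarefree hsf hns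
  obtain ⟨p, hpn, hp, hJp⟩ := exists_prime_gt_jacobiSym_eq_neg_one_of_odd hr hJ (max n b)
  have hbp : (b : ℤ).gcd p = 1 := by
    rw [Int.gcd_natCast_natCast]
    exact (Nat.coprime_of_lt_prime hb (by omega) hp).symm
  exact ⟨p, (le_max_left n b).trans_lt hpn, hp, by
    rw [hm_eq, jacobiSym.mul_left, jacobiSym.sq_one' hbp, hJp, one_mul]⟩

theorem ZMod.odd_val_unit {k : ℕ} (u : (ZMod (4 * k))ˣ) : Odd (u : ZMod (4 * k)).val :=
  (Nat.coprime_four_mul_iff.1 (ZMod.val_coe_unit_coprime u)).1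

def jacobiSymHom (m : ℤ) : (ZMod (4 * m.natAbs))ˣ →* ℤ where
  toFun u := J(m | (u : ZMod (4 * m.natAbs)).val)
  map_one' := by rw [Units.val_one, ZMod.val_one'' (by omega), jacobiSym.one_right]
  map_mul' u v := by
    have hu := ZMod.odd_val_unit u
    have hv := ZMod.odd_val_unit v
    rw [Units.val_mul, ZMod.val_mul, ← jacobiSym.mod_right m (hu.mul hv),
      jacobiSym.mul_right' m hu.pos.ne' hv.pos.ne']

theorem jacobiSymHom_eq_one_iff (m : ℤ) : jacobiSymHom m = 1 ↔ IsSquare m := by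
  refine ⟨fun h => by_contra fun hm => ?_, ?_⟩
  · have hN : 4 * m.natAbs ≠ 0 := by
      have : m ≠ 0 := fun h => hm (h ▸ IsSquare.zero)
      omega
    obtain ⟨p, hpN, hp, hJ⟩ := exists_prime_gt_jacobiSym_eq_neg_one hm (4 * m.natAbs)
    have hp1 := DFunLike.congr_fun h (ZMod.unitOfCoprime p (Nat.coprime_of_lt_prime hN hpN hp))
    change J(m | ((p : ZMod (4 * m.natAbs))).val) = 1 at hp1
    rw [ZMod.val_natCast, ← jacobiSym.mod_right m (hp.odd_of_ne_two (by omega)), hJ] at hp1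
    norm_num at hp1
  · rintro ⟨c, rfl⟩
    ext u
    change J(c * c | (u : ZMod (4 * (c * c).natAbs)).val) = 1
    have hc : c.natAbs ∣ 4 * (c * c).natAbs := Dvd.dvd.mul_left (by simp [Int.natAbs_mul]) 4
    have := jacobiSym.sq_one' (a := c)
      (Nat.Coprime.coprime_dvd_left hc (ZMod.val_coe_unit_coprime u).symm)
    rwa [sq] at this

theorem ZMod.sum_units_val_eq_sum_coprime {M : Type*} [AddCommMonoid M] (N : ℕ) [NeZero N]
    (f : ℕ → M) :
    ∑ u : (ZMod N)ˣ, f (u : ZMod N).val = ∑ d ∈ range N with d.Coprime N, f d := by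
  refine Finset.sum_bij (fun u _ => (u : ZMod N).val) (fun u _ => ?_)
    (fun u _ v _ h => Units.ext (ZMod.val_injective N h)) (fun d hd => ?_) (fun _ _ => rfl)
  · simpa using ⟨ZMod.val_lt _, ZMod.val_coe_unit_coprime u⟩
  · rw [mem_filter, mem_range] at hd
    exact ⟨ZMod.unitOfCoprime d hd.2, mem_univ _, by
      rw [ZMod.coe_unitOfCoprime, ZMod.val_natCast, Nat.mod_eq_of_lt hd.1]⟩

theorem sum_odd_jacobiSym_eq_sum_coprime (m : ℤ) :
    ∑ d ∈ range (4 * m.natAbs) with ¬ 2 ∣ d, J(m | d) =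
      ∑ d ∈ range (4 * m.natAbs) with d.Coprime (4 * m.natAbs), J(m | d) := by
  refine (sum_subset (fun d => ?_) fun d hd hd' => ?_).symm
  · simp only [mem_filter, Nat.coprime_four_mul_iff, ← Nat.not_even_iff_odd, even_iff_two_dvd]
    exact fun h => ⟨h.1, h.2.1⟩
  · simp only [mem_filter, Nat.coprime_four_mul_iff, ← Nat.not_even_iff_odd,
      even_iff_two_dvd] at hd hd'
    rw [jacobiSym.eq_zero_iff, Int.gcd_eq_natAbs, Int.natAbs_natCast]
    exact ⟨by omega, fun hg => hd' ⟨hd.1, hd.2, Nat.Coprime.symm hg⟩⟩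

theorem sum_odd_jacobiSym {m : ℤ} (hm : m ≠ 0) :
    ∑ d ∈ range (4 * m.natAbs) with ¬ 2 ∣ d, J(m | d) =
      if IsSquare m then ((4 * m.natAbs).totient : ℤ) else 0 := by
  have : NeZero (4 * m.natAbs) := ⟨by omega⟩
  classical
  rw [sum_odd_jacobiSym_eq_sum_coprime, ← ZMod.sum_units_val_eq_sum_coprime]
  change ∑ u, jacobiSymHom m u = _
  rw [sum_hom_units, ZMod.card_units_eq_totient]
  simp only [jacobiSymHom_eq_one_iff, Nat.cast_ite, Nat.cast_zero]

theorem kron_natCast_of_odd (a : ℤ) {d : ℕ} (hd : Odd d) : kron a d = J(a | d) := by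
  have hd0 : d ≠ 0 := hd.pos.ne'
  rw [kron, if_neg (by exact_mod_cast hd0), if_neg (by omega), one_mul, Int.natAbs_natCast,
    Nat.multiplicative_factorization (fun b => J(a | b)) (fun x y hxy => ?_)
      (jacobiSym.one_right a) hd0]
  · refine Finsupp.prod_congr fun p hp => ?_
    have hp2 : p ≠ 2 := by
      rintro rfl
      exact (Nat.not_even_iff_odd.2 hd) (even_iff_two_dvd.2
        (Nat.dvd_of_mem_primeFactors (Nat.support_factorization d ▸ hp)))
    rw [kronPrime, if_neg hp2, jacobiSym.pow_right]
  · rcases eq_or_ne x 0 with rfl | hx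
    · rw [(Nat.coprime_zero_left y).1 hxy, mul_one, jacobiSym.one_right, mul_one]
    rcases eq_or_ne y 0 with rfl | hy
    · rw [(Nat.coprime_zero_right x).1 hxy, one_mul, jacobiSym.one_right, one_mul]
    exact jacobiSym.mul_right' a hx hy

theorem epsd_zpow_mul_jacobiSym (κ a : ℤ) {d : ℕ} (hd : Odd d) :
    epsd d ^ (-κ) * (J(a | d) : ℂ) =
      (1 + Complex.I ^ (-κ)) / 2 * J(a | d) + (1 - Complex.I ^ (-κ)) / 2 * J(-a | d) := by
  rw [jacobiSym.neg a hd, ZMod.χ₄_nat_mod_four]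
  rcases Nat.odd_mod_four_iff.1 (Nat.odd_iff.1 hd) with h | h
  · rw [show epsd d = 1 from if_pos h, h, show ZMod.χ₄ ((1 : ℕ) : ZMod 4) = 1 by decide,
      one_zpow]
    push_cast
    ring
  · rw [show epsd d = Complex.I from if_neg (by omega), h,
      show ZMod.χ₄ ((3 : ℕ) : ZMod 4) = -1 by decide]
    push_cast
    ring

theorem Kl_zero (κ : ℤ) (n : ℕ) :
    Kl κ 0 n =
      (1 + Complex.I ^ (-κ)) / 2 *
          ((∑ d ∈ range (4 * n) with ¬ 2 ∣ d, J(n | d) : ℤ) : ℂ) +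
        (1 - Complex.I ^ (-κ)) / 2 *
          ((∑ d ∈ range (4 * n) with ¬ 2 ∣ d, J(-n | d) : ℤ) : ℂ) := by
  push_cast
  rw [mul_sum, mul_sum, ← sum_add_distrib, Kl]
  refine sum_congr rfl fun d hd => ?_
  have hd : Odd d := Nat.odd_iff.2 (Nat.two_dvd_ne_zero.1 (mem_filter.1 hd).2)
  rw [Int.cast_zero, zero_mul, zero_div, e2pi, Rat.cast_zero, mul_zero, Complex.exp_zero, mul_one,
    kron_natCast_of_odd _ hd, jacobiSym.mul_left, jacobiSym.at_four hd, one_mul,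
    epsd_zpow_mul_jacobiSym κ n hd]

/-- `K_κ(0;4n)` vanishes unless `n` is a square, in which case it equals
`(1 + i^{-κ}) φ(4n)/2`. -/
theorem kloosterman_at_zero (κ : ℤ) (n : ℕ) (hn : 0 < n) :
    (¬ IsSquare n → Kl κ 0 n = 0) ∧
    (IsSquare n → Kl κ 0 n = (1 + Complex.I ^ (-κ)) * (Nat.totient (4 * n) : ℂ) / 2) := by
  have hsum_pos := sum_odd_jacobiSym (m := n) (by omega)
  have hsum_neg := sum_odd_jacobiSym (m := -n) (by omega)
  have hns : ¬ IsSquare (-(n : ℤ)) := fun ⟨r, hr⟩ => by nlinarith [mul_self_nonneg r]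
  rw [Int.natAbs_natCast] at hsum_pos
  rw [Int.natAbs_neg, Int.natAbs_natCast, if_neg hns] at hsum_neg
  rw [Kl_zero, hsum_pos, hsum_neg, Int.cast_zero, mul_zero, add_zero]
  refine ⟨fun h => ?_, fun h => ?_⟩
  · rw [if_neg (mt Int.isSquare_natCast_iff.1 h), Int.cast_zero, mul_zero]
  · rw [if_pos (Int.isSquare_natCast_iff.2 h), Int.cast_natCast]
    ring
end

section
/- Let A₁ > 0 and A₂ ≠ 0 be integers with gcd(A₁,A₂) = 1 and A₁ + A₂ ≡ 0 (mod 4). Then S(A₁,A₂) consists precisely of the tuples (B₁, C₁, B₂, C₂) with C₁ = −(A₁C₂ + 4B₁B₂)/A₂, where: (i) 0 ≤ B₁ < A₁ and gcd(B₁,A₁) = 1; (ii) 0 ≤ sign(A₂)·B₂ < |A₂| and gcd(B₂,A₂) = 1; (iii) C₂ is an integer with A₁C₂ ≡ −4B₁B₂ (mod A₂), C₂ ≡ −1 (mod 4), and 0 ≤ sign(A₂)·C₂ < 4|A₂|. In particular, the cardinality of S(A₁,A₂) equals φ(A₁)·φ(|A₂|). -/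
/-!
The defining equation `A₁C₂ + 4B₁B₂ + C₁A₂ = 0` makes every common divisor of `A₁` and `B₁`
divide `C₁A₂`, hence `C₁` since `A₁, A₂` are coprime (and symmetrically for `A₂, B₂, C₂`), so the
gcd conditions reduce to `gcd(Bᵢ, Aᵢ) = 1`. Read modulo 4, with `A₂ ≡ -A₁` and `A₁` odd, it also
forces `C₁ ≡ -1` once `C₂ ≡ -1`. For fixed `B₁, B₂` the conditions on `C₂` are a congruence modulo
`A₂` and one modulo 4; by the Chinese remainder theorem they fix `C₂` modulo `4A₂`, hence uniquely
in the normalization window, and the equation then fixes `C₁`. So `(B₁, C₁, B₂, C₂) ↦ (B₁, B₂)` is a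
bijection onto pairs of reduced residues modulo `A₁` and `A₂`, counted by `φ(A₁) φ(|A₂|)`.
-/

/-- The set `S(A₁,A₂)` of normalized tuples `(B₁,C₁,B₂,C₂)` satisfying
`A₁C₂ + 4B₁B₂ + C₁A₂ = 0`, the gcd conditions, `Cᵢ ≡ -1 (mod 4)` and the
normalization inequalities. -/
def PlSet (A₁ A₂ : ℤ) : Set (ℤ × ℤ × ℤ × ℤ) :=
  {v | A₁ * v.2.2.2 + 4 * v.1 * v.2.2.1 + v.2.1 * A₂ = 0 ∧
    Int.gcd A₁ (Int.gcd v.1 v.2.1) = 1 ∧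
    Int.gcd A₂ (Int.gcd v.2.2.1 v.2.2.2) = 1 ∧
    v.2.1 ≡ -1 [ZMOD 4] ∧ v.2.2.2 ≡ -1 [ZMOD 4] ∧
    0 ≤ (v.1 : ℚ) / (A₁ : ℚ) ∧ (v.1 : ℚ) / (A₁ : ℚ) < 1 ∧
    0 ≤ (v.2.2.1 : ℚ) / (A₂ : ℚ) ∧ (v.2.2.1 : ℚ) / (A₂ : ℚ) < 1 ∧
    0 ≤ (v.2.2.2 : ℚ) / (4 * (A₂ : ℚ)) ∧ (v.2.2.2 : ℚ) / (4 * (A₂ : ℚ)) < 1}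

theorem sign_mul_sign_of_ne_zero {A : ℤ} (hA : A ≠ 0) : A.sign * A.sign = 1 := by
  rcases hA.lt_or_gt with h | h <;> simp [Int.sign_eq_neg_one_of_neg, Int.sign_eq_one_of_pos, h]

theorem abs_eq_sign_mul_of_nonneg {A b : ℤ} (hA : A ≠ 0) (hb : 0 ≤ A.sign * b) :
    |b| = A.sign * b := by
  rcases hA.lt_or_gt with h | h
  · rw [Int.sign_eq_neg_one_of_neg h] at hb ⊢
    rw [abs_of_nonpos (by linarith)]; ring
  · rw [Int.sign_eq_one_of_pos h] at hb ⊢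
    rw [abs_of_nonneg (by linarith)]; ring

theorem div_nonneg_and_div_lt_one_iff {A : ℤ} (hA : A ≠ 0) (a : ℤ) :
    (0 ≤ (a : ℚ) / A ∧ (a : ℚ) / A < 1) ↔ (0 ≤ A.sign * a ∧ A.sign * a < |A|) := by
  have hdiv : (a : ℚ) / A = ((A.sign * a : ℤ) : ℚ) / ((|A| : ℤ) : ℚ) := by
    rcases hA.lt_or_gt with h | h
    · simp [Int.sign_eq_neg_one_of_neg h, abs_of_neg h]
    · simp [Int.sign_eq_one_of_pos h, abs_of_pos h]
  have hpos : (0 : ℚ) < ((|A| : ℤ) : ℚ) := by exact_mod_cast abs_pos.mpr hA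
  rw [hdiv, le_div_iff₀ hpos, div_lt_one hpos, zero_mul]
  norm_cast

theorem isCoprime_four_of_add_modEq_zero {a b : ℤ} (hab : IsCoprime a b)
    (h : a + b ≡ 0 [ZMOD 4]) : IsCoprime 4 a := by
  have hodd : Odd a := by
    by_contra hev
    obtain ⟨k, rfl⟩ := Int.not_odd_iff_even.mp hev
    have h2b : (2 : ℤ) ∣ b := by have := h.dvd; omega
    have := Int.isUnit_iff.mp (hab.isUnit_of_dvd' ⟨k, by ring⟩ h2b)
    omega
  simpa using (Int.isCoprime_two_left.mpr hodd).pow_left (m := 2)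

theorem gcd_dvd_of_add_eq_zero {a a' b c x y : ℤ} (hcop : IsCoprime a a')
    (h : a * x + b * y + c * a' = 0) : (Int.gcd a b : ℤ) ∣ c := by
  have ha : (Int.gcd a b : ℤ) ∣ a := Int.gcd_dvd_left a b
  have hb : (Int.gcd a b : ℤ) ∣ b := Int.gcd_dvd_right a b
  refine (hcop.of_isCoprime_of_dvd_left ha).dvd_of_dvd_mul_right ?_
  rw [show c * a' = -(a * x + b * y) by linear_combination h]
  exact (dvd_add (ha.mul_right x) (hb.mul_right y)).neg_right

theorem gcd_gcd_eq_gcd_of_dvd {a b c : ℤ} (h : (Int.gcd a b : ℤ) ∣ c) :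
    Int.gcd a (Int.gcd b c) = Int.gcd b a := by
  have := Int.gcd_eq_left (Int.natCast_nonneg _) h
  rw [← Int.gcd_assoc, Int.gcd_comm b a]
  exact_mod_cast this

theorem modEq_neg_one_of_add_eq_zero {a b c x z : ℤ} (h4 : IsCoprime 4 a)
    (hab : a + b ≡ 0 [ZMOD 4]) (hc : c ≡ -1 [ZMOD 4]) (h : a * c + 4 * z + x * b = 0) :
    x ≡ -1 [ZMOD 4] := by
  obtain ⟨k, hk⟩ := hab.dvd
  obtain ⟨m, hm⟩ := hc.dvd
  refine Int.modEq_iff_dvd.mpr (h4.dvd_of_dvd_mul_left ⟨-z + a * m + x * k, ?_⟩)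
  linear_combination h + a * hm + x * hk

theorem mem_plSet_iff {A₁ A₂ : ℤ} (hA₁ : 0 < A₁) (hA₂ : A₂ ≠ 0) (hcop : IsCoprime A₁ A₂)
    (hmod : A₁ + A₂ ≡ 0 [ZMOD 4]) (B₁ C₁ B₂ C₂ : ℤ) :
    (B₁, C₁, B₂, C₂) ∈ PlSet A₁ A₂ ↔
      (C₁ * A₂ = -(A₁ * C₂ + 4 * B₁ * B₂) ∧
       0 ≤ B₁ ∧ B₁ < A₁ ∧ Int.gcd B₁ A₁ = 1 ∧
       0 ≤ A₂.sign * B₂ ∧ A₂.sign * B₂ < |A₂| ∧ Int.gcd B₂ A₂ = 1 ∧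
       A₁ * C₂ ≡ -(4 * B₁ * B₂) [ZMOD A₂] ∧ C₂ ≡ -1 [ZMOD 4] ∧
       0 ≤ A₂.sign * C₂ ∧ A₂.sign * C₂ < 4 * |A₂|) := by
  have hB₁ : (0 ≤ (B₁ : ℚ) / A₁ ∧ (B₁ : ℚ) / A₁ < 1) ↔ (0 ≤ B₁ ∧ B₁ < A₁) := by
    simpa [Int.sign_eq_one_of_pos hA₁, abs_of_pos hA₁] using
      div_nonneg_and_div_lt_one_iff hA₁.ne' B₁
  have hB₂ := div_nonneg_and_div_lt_one_iff hA₂ B₂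
  have hC₂ : (0 ≤ (C₂ : ℚ) / (4 * A₂) ∧ (C₂ : ℚ) / (4 * A₂) < 1) ↔
      (0 ≤ A₂.sign * C₂ ∧ A₂.sign * C₂ < 4 * |A₂|) := by
    simpa [Int.sign_mul, Int.sign_eq_one_of_pos four_pos, abs_mul] using
      div_nonneg_and_div_lt_one_iff (mul_ne_zero four_ne_zero hA₂) C₂
  have hgcd (heq : A₁ * C₂ + 4 * B₁ * B₂ + C₁ * A₂ = 0) :
      Int.gcd A₁ (Int.gcd B₁ C₁) = Int.gcd B₁ A₁ ∧ Int.gcd A₂ (Int.gcd B₂ C₂) = Int.gcd B₂ A₂ :=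
    ⟨gcd_gcd_eq_gcd_of_dvd (gcd_dvd_of_add_eq_zero (x := C₂) (y := 4 * B₂) hcop
        (by linear_combination heq)),
      gcd_gcd_eq_gcd_of_dvd (gcd_dvd_of_add_eq_zero (x := C₁) (y := 4 * B₁) hcop.symm
        (by linear_combination heq))⟩
  constructor
  · rintro ⟨heq, hg₁, hg₂, -, hC₂4, hB₁a, hB₁b, hB₂a, hB₂b, hC₂a, hC₂b⟩
    rw [(hgcd heq).1] at hg₁
    rw [(hgcd heq).2] at hg₂
    obtain ⟨hB₁₀, hB₁A⟩ := hB₁.1 ⟨hB₁a, hB₁b⟩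
    obtain ⟨hB₂₀, hB₂A⟩ := hB₂.1 ⟨hB₂a, hB₂b⟩
    exact ⟨by linear_combination heq, hB₁₀, hB₁A, hg₁, hB₂₀, hB₂A, hg₂,
      Int.modEq_iff_dvd.mpr ⟨C₁, by linear_combination -heq⟩, hC₂4, hC₂.1 ⟨hC₂a, hC₂b⟩⟩
  · rintro ⟨heq, hB₁a, hB₁b, hg₁, hB₂a, hB₂b, hg₂, -, hC₂4, hC₂w⟩
    have heq' : A₁ * C₂ + 4 * B₁ * B₂ + C₁ * A₂ = 0 := by linear_combination heq
    rw [← (hgcd heq').1] at hg₁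
    rw [← (hgcd heq').2] at hg₂
    have hC₁4 := modEq_neg_one_of_add_eq_zero (isCoprime_four_of_add_modEq_zero hcop hmod)
      hmod hC₂4 (by linear_combination heq' : A₁ * C₂ + 4 * (B₁ * B₂) + C₁ * A₂ = 0)
    obtain ⟨hB₁₀, hB₁A⟩ := hB₁.2 ⟨hB₁a, hB₁b⟩
    obtain ⟨hB₂₀, hB₂A⟩ := hB₂.2 ⟨hB₂a, hB₂b⟩
    exact ⟨heq', hg₁, hg₂, hC₁4, hC₂4, hB₁₀, hB₁A, hB₂₀, hB₂A, hC₂.2 hC₂w⟩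

def reducedResidues (A : ℤ) : Set ℤ :=
  {b | 0 ≤ A.sign * b ∧ A.sign * b < |A| ∧ Int.gcd b A = 1}

theorem mem_reducedResidues_of_pos {A b : ℤ} (hA : 0 < A) :
    b ∈ reducedResidues A ↔ 0 ≤ b ∧ b < A ∧ Int.gcd b A = 1 := by
  simp [reducedResidues, Int.sign_eq_one_of_pos hA, abs_of_pos hA]

theorem reducedResidues_eq_image {A : ℤ} (hA : A ≠ 0) :
    reducedResidues A = (fun m : ℕ => A.sign * m) '' {m | m < A.natAbs ∧ A.natAbs.Coprime m} := by
  have hss := sign_mul_sign_of_ne_zero hA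
  ext b
  simp only [reducedResidues, Set.mem_image, Set.mem_ofPred_eq]
  constructor
  · rintro ⟨h0, hlt, hgcd⟩
    have hb := abs_eq_sign_mul_of_nonneg hA h0
    have hlt' : |b| < |A| := hb ▸ hlt
    rw [Int.abs_eq_natAbs, Int.abs_eq_natAbs] at hlt'
    refine ⟨b.natAbs, ⟨by exact_mod_cast hlt', Nat.Coprime.symm hgcd⟩, ?_⟩
    rw [Int.natCast_natAbs, hb, ← mul_assoc, hss, one_mul]
  · rintro ⟨m, ⟨hm, hcop⟩, rfl⟩
    rw [← mul_assoc, hss, one_mul, Int.abs_eq_natAbs]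
    refine ⟨by positivity, by exact_mod_cast hm, ?_⟩
    rw [Int.gcd, Int.natAbs_mul, Int.natAbs_sign_of_ne_zero hA, one_mul, Int.natAbs_natCast]
    exact hcop.symm

theorem card_reducedResidues {A : ℤ} (hA : A ≠ 0) :
    Nat.card (reducedResidues A) = A.natAbs.totient := by
  have hinj : Function.Injective (fun m : ℕ => A.sign * m) :=
    (mul_right_injective₀ (mt Int.sign_eq_zero_iff_zero.mp hA)).comp Nat.cast_injective
  rw [reducedResidues_eq_image hA, Nat.card_image_of_injective hinj,
    Nat.totient_eq_card_lt_and_coprime]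

theorem eq_of_modEq_of_sign_mul_mem_Ico {m c c' : ℤ} (hm : m ≠ 0) (h : c ≡ c' [ZMOD m])
    (hc : 0 ≤ m.sign * c ∧ m.sign * c < |m|) (hc' : 0 ≤ m.sign * c' ∧ m.sign * c' < |m|) :
    c = c' := by
  have hdvd : |m| ∣ m.sign * (c' - c) := ((abs_dvd_self m).trans h.dvd).mul_left _
  have hzero := Int.eq_zero_of_abs_lt_dvd hdvd (by rw [abs_lt]; constructor <;> linarith)
  have := (mul_eq_zero.mp hzero).resolve_left (mt Int.sign_eq_zero_iff_zero.mp hm)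
  linarith

theorem existsUnique_modEq_sign_mul_mem_Ico {m : ℤ} (hm : m ≠ 0) (a : ℤ) :
    ∃! c, c ≡ a [ZMOD m] ∧ 0 ≤ m.sign * c ∧ m.sign * c < |m| := by
  have hss := sign_mul_sign_of_ne_zero hm
  set c := m.sign * (m.sign * a % m)
  have hsc : m.sign * c = m.sign * a % m := by rw [← mul_assoc, hss, one_mul]
  have hca : c ≡ a [ZMOD m] := by
    simpa [← mul_assoc, hss] using (Int.mod_modEq (m.sign * a) m).mul_left m.sign
  have hc : 0 ≤ m.sign * c ∧ m.sign * c < |m| := by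
    rw [hsc, Int.abs_eq_natAbs]
    exact ⟨Int.emod_nonneg _ hm, Int.emod_lt _ hm⟩
  exact ⟨c, ⟨hca, hc⟩, fun c' hc' =>
    eq_of_modEq_of_sign_mul_mem_Ico hm (hc'.1.trans hca.symm) hc'.2 hc⟩

theorem exists_modEq_and_modEq_of_isCoprime {m n : ℤ} (h : IsCoprime m n) (x y : ℤ) :
    ∃ c, c ≡ x [ZMOD m] ∧ c ≡ y [ZMOD n] := by
  obtain ⟨u, v, huv⟩ := h
  refine ⟨x * (v * n) + y * (u * m), Int.modEq_iff_dvd.mpr ⟨u * (x - y), ?_⟩,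
    Int.modEq_iff_dvd.mpr ⟨v * (y - x), ?_⟩⟩
  · linear_combination -x * huv
  · linear_combination -y * huv

theorem existsUnique_mul_modEq_and_modEq_four {a n : ℤ} (hn : n ≠ 0) (han : IsCoprime a n)
    (h4n : IsCoprime 4 n) (r : ℤ) :
    ∃! c, a * c ≡ r [ZMOD n] ∧ c ≡ -1 [ZMOD 4] ∧ 0 ≤ n.sign * c ∧ n.sign * c < 4 * |n| := by
  have ⟨u, v, huv⟩ := han
  obtain ⟨c₀, hc₀4, hc₀n⟩ := exists_modEq_and_modEq_of_isCoprime h4n (-1) (u * r)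
  have hac₀ : a * c₀ ≡ r [ZMOD n] :=
    (hc₀n.mul_left a).trans (Int.modEq_iff_dvd.mpr ⟨r * v, by linear_combination -r * huv⟩)
  have hsol : ∀ c, (a * c ≡ r [ZMOD n] ∧ c ≡ -1 [ZMOD 4]) ↔ c ≡ c₀ [ZMOD 4 * n] := by
    intro c
    have hcancel : a * c ≡ a * c₀ [ZMOD n] ↔ c ≡ c₀ [ZMOD n] := by
      simp only [Int.modEq_iff_dvd, ← mul_sub]
      exact ⟨han.symm.dvd_of_dvd_mul_left, (·.mul_left a)⟩
    rw [← Int.modEq_and_modEq_iff_modEq_mul (Int.isCoprime_iff_gcd_eq_one.mp h4n), and_comm,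
      ← hcancel]
    exact and_congr ⟨(·.trans hc₀4.symm), (·.trans hc₀4)⟩ ⟨(·.trans hac₀.symm), (·.trans hac₀)⟩
  have hsign : (4 * n).sign = n.sign := by
    rw [Int.sign_mul, Int.sign_eq_one_of_pos four_pos, one_mul]
  have habs : |4 * n| = 4 * |n| := by simp [abs_mul]
  refine (existsUnique_congr fun c => ?_).mpr
    (existsUnique_modEq_sign_mul_mem_Ico (mul_ne_zero four_ne_zero hn) c₀)
  rw [← and_assoc, hsol, hsign, habs]

theorem plSet_bijOn {A₁ A₂ : ℤ} (hA₁ : 0 < A₁) (hA₂ : A₂ ≠ 0) (hcop : IsCoprime A₁ A₂)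
    (hmod : A₁ + A₂ ≡ 0 [ZMOD 4]) :
    Set.BijOn (fun v : ℤ × ℤ × ℤ × ℤ => (v.1, v.2.2.1)) (PlSet A₁ A₂)
      (reducedResidues A₁ ×ˢ reducedResidues A₂) := by
  have hmem := mem_plSet_iff hA₁ hA₂ hcop hmod
  have hC₂ := existsUnique_mul_modEq_and_modEq_four hA₂ hcop
    (isCoprime_four_of_add_modEq_zero hcop.symm (by rwa [add_comm] at hmod))
  refine ⟨?_, ?_, ?_⟩
  · rintro ⟨B₁, C₁, B₂, C₂⟩ hv
    obtain ⟨-, hB₁a, hB₁b, hg₁, hB₂a, hB₂b, hg₂, -⟩ := (hmem B₁ C₁ B₂ C₂).1 hv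
    exact ⟨(mem_reducedResidues_of_pos hA₁).2 ⟨hB₁a, hB₁b, hg₁⟩, hB₂a, hB₂b, hg₂⟩
  · rintro ⟨B₁, C₁, B₂, C₂⟩ hv ⟨B₁', C₁', B₂', C₂'⟩ hw hvw
    obtain ⟨rfl, rfl⟩ := Prod.mk.inj hvw
    obtain ⟨heq, -, -, -, -, -, -, hv₂⟩ := (hmem B₁ C₁ B₂ C₂).1 hv
    obtain ⟨heq', -, -, -, -, -, -, hw₂⟩ := (hmem B₁ C₁' B₂ C₂').1 hw
    obtain rfl : C₂ = C₂' := (hC₂ _).unique hv₂ hw₂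
    obtain rfl : C₁ = C₁' := mul_right_cancel₀ hA₂ (heq.trans heq'.symm)
    rfl
  · rintro ⟨B₁, B₂⟩ ⟨hB₁, hB₂a, hB₂b, hg₂⟩
    obtain ⟨hB₁a, hB₁b, hg₁⟩ := (mem_reducedResidues_of_pos hA₁).1 hB₁
    obtain ⟨C₂, hC₂w, -⟩ := hC₂ (-(4 * B₁ * B₂))
    obtain ⟨C₁, hC₁⟩ := hC₂w.1.dvd
    exact ⟨(B₁, C₁, B₂, C₂), (hmem B₁ C₁ B₂ C₂).2 ⟨by linear_combination -hC₁, hB₁a, hB₁b, hg₁,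
      hB₂a, hB₂b, hg₂, hC₂w⟩, rfl⟩

/-- Explicit description of `S(A₁,A₂)` for coprime `A₁,A₂`, and its cardinality
`φ(A₁)φ(|A₂|)`. -/
theorem plset_coprime_description (A₁ A₂ : ℤ) (hA₁ : 0 < A₁) (hA₂ : A₂ ≠ 0)
    (hcop : Int.gcd A₁ A₂ = 1) (hmod : A₁ + A₂ ≡ 0 [ZMOD 4]) :
    (∀ B₁ C₁ B₂ C₂ : ℤ, (B₁, C₁, B₂, C₂) ∈ PlSet A₁ A₂ ↔
      (C₁ * A₂ = -(A₁ * C₂ + 4 * B₁ * B₂) ∧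
       0 ≤ B₁ ∧ B₁ < A₁ ∧ Int.gcd B₁ A₁ = 1 ∧
       0 ≤ A₂.sign * B₂ ∧ A₂.sign * B₂ < |A₂| ∧ Int.gcd B₂ A₂ = 1 ∧
       A₁ * C₂ ≡ -(4 * B₁ * B₂) [ZMOD A₂] ∧ C₂ ≡ -1 [ZMOD 4] ∧
       0 ≤ A₂.sign * C₂ ∧ A₂.sign * C₂ < 4 * |A₂|)) ∧
    Nat.card ↥(PlSet A₁ A₂) = Nat.totient A₁.natAbs * Nat.totient A₂.natAbs := by
  have hcop' := Int.isCoprime_iff_gcd_eq_one.mpr hcop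
  refine ⟨mem_plSet_iff hA₁ hA₂ hcop' hmod, ?_⟩
  rw [Nat.card_congr (((plSet_bijOn hA₁ hA₂ hcop' hmod).equiv _).trans (Equiv.Set.prod _ _)),
    Nat.card_prod, card_reducedResidues hA₁.ne', card_reducedResidues hA₂]
end

section
/- Let p be an odd prime and k ∈ ℤ_{>0}. Then S(p^k, −p^k) consists precisely of the following tuples (B₁, C₁, B₂, C₂), where in every case C₁ is the unique integer determined by p^kC₂ + 4B₁B₂ − C₁p^k = 0: (1) (0, C₂, 0, C₂) with 0 ≤ −C₂ < 4p^k, C₂ ≡ −1 (mod 4), gcd(C₂,p) = 1; (2) (0, C₂, B₂, C₂) with 0 < −B₂ < p^k, 0 ≤ −C₂ < 4p^k, C₂ ≡ −1 (mod 4), gcd(C₂,p) = 1; (3) (B₁, C₂, 0, C₂) with 0 < B₁ < p^k, 0 ≤ −C₂ < 4p^k, C₂ ≡ −1 (mod 4), gcd(C₂,p) = 1; (4) (b₁p^i, C₂ + 4b₁b₂, b₂p^j, C₂) with 0 < i < k, 0 < j < k, i + j = k, 0 < b₁ < p^{k−i}, gcd(b₁,p) = 1, 0 < −b₂ < p^{k−j},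 gcd(b₂,p) = 1, 0 ≤ −C₂ < 4p^k, C₂ ≡ −1 (mod 4), gcd(C₂,p) = 1, and C₂ + 4b₁b₂ ≢ 0 (mod p); (5) (b₁p^i, C₂ + 4b₁b₂p^{i+j−k}, b₂p^j, C₂) with 0 < i < k, 0 < j < k, i + j > k, 0 < b₁ < p^{k−i}, gcd(b₁,p) = 1, 0 < −b₂ < p^{k−j}, gcd(b₂,p) = 1, 0 ≤ −C₂ < 4p^k, C₂ ≡ −1 (mod 4), gcd(C₂,p) = 1. -/
theorem intCast_div_nonneg_and_lt_one_iff {x A : ℤ} (hA : 0 < A) :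
    (0 ≤ (x : ℚ) / A ∧ (x : ℚ) / A < 1) ↔ 0 ≤ x ∧ x < A := by
  have hA' : (0 : ℚ) < A := by exact_mod_cast hA
  rw [div_lt_one hA', le_div_iff₀ hA', zero_mul]
  norm_cast

theorem mem_plSet_neg_iff {A : ℤ} (hA : 0 < A) {B₁ C₁ B₂ C₂ : ℤ} :
    (B₁, C₁, B₂, C₂) ∈ PlSet A (-A) ↔
      A * C₂ + 4 * B₁ * B₂ - C₁ * A = 0 ∧
      Int.gcd A (Int.gcd B₁ C₁) = 1 ∧ Int.gcd A (Int.gcd B₂ C₂) = 1 ∧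
      C₁ ≡ -1 [ZMOD 4] ∧ C₂ ≡ -1 [ZMOD 4] ∧
      (0 ≤ B₁ ∧ B₁ < A) ∧ (0 ≤ -B₂ ∧ -B₂ < A) ∧ (0 ≤ -C₂ ∧ -C₂ < 4 * A) := by
  have hB₂ : (B₂ : ℚ) / ((-A : ℤ) : ℚ) = ((-B₂ : ℤ) : ℚ) / A := by
    push_cast; rw [div_neg, neg_div]
  have hC₂ : (C₂ : ℚ) / (4 * ((-A : ℤ) : ℚ)) = ((-C₂ : ℤ) : ℚ) / ((4 * A : ℤ) : ℚ) := by
    push_cast; rw [mul_neg, div_neg, neg_div]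
  have hE : A * C₂ + 4 * B₁ * B₂ + C₁ * -A = A * C₂ + 4 * B₁ * B₂ - C₁ * A := by ring
  rw [← intCast_div_nonneg_and_lt_one_iff hA, ← intCast_div_nonneg_and_lt_one_iff hA,
    ← intCast_div_nonneg_and_lt_one_iff (by positivity : 0 < 4 * A)]
  simp only [PlSet, Set.mem_ofPred_eq, Int.neg_gcd, hB₂, hC₂, hE, and_assoc]

theorem Int.gcd_pow_gcd_eq_one_iff_of_prime {p : ℤ} (hp : Prime p) {k : ℕ} (hk : k ≠ 0)
    (a b : ℤ) : Int.gcd (p ^ k) (Int.gcd a b) = 1 ↔ ¬(p ∣ a ∧ p ∣ b) := by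
  rw [← Int.isCoprime_iff_gcd_eq_one, IsCoprime.pow_left_iff (Nat.pos_of_ne_zero hk),
    hp.coprime_iff_not_dvd, Int.dvd_coe_gcd_iff]

theorem Int.gcd_eq_one_iff_not_dvd_of_prime {p : ℤ} (hp : Prime p) (m : ℤ) :
    Int.gcd m p = 1 ↔ ¬p ∣ m := by
  rw [Int.gcd_comm, ← Int.isCoprime_iff_gcd_eq_one, hp.coprime_iff_not_dvd]

theorem Nat.Prime.not_intCast_dvd_four {p : ℕ} (hp : p.Prime) (hp2 : p ≠ 2) : ¬(p : ℤ) ∣ 4 := by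
  intro h
  have h2 : p ∣ 2 ^ 2 := by exact_mod_cast h
  exact hp2 ((Nat.prime_dvd_prime_iff_eq hp Nat.prime_two).mp (hp.dvd_of_dvd_pow h2))

theorem mul_pow_lt_pow_iff {R : Type*} [CommSemiring R] [LinearOrder R] [IsStrictOrderedRing R]
    {p b : R} (hp : 0 < p) {i k : ℕ} (hik : i ≤ k) :
    b * p ^ i < p ^ k ↔ b < p ^ (k - i) := by
  rw [← Nat.sub_add_cancel hik, pow_add, Nat.add_sub_cancel]
  exact mul_lt_mul_iff_left₀ (pow_pos hp i)

theorem le_of_mul_pow_eq_mul_pow {M : Type*} [CommMonoidWithZero M] [IsCancelMulZero M]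
    {p m d : M} (hp : p ≠ 0) (hm : ¬p ∣ m) {n k : ℕ} (h : m * p ^ n = d * p ^ k) : k ≤ n := by
  by_contra! hnk
  obtain ⟨e, rfl⟩ := Nat.exists_eq_add_of_lt hnk
  have h' : m * p ^ n = p * (d * p ^ e) * p ^ n := by rw [h, pow_succ, pow_add]; ac_rfl
  exact hm ⟨d * p ^ e, mul_right_cancel₀ (pow_ne_zero n hp) h'⟩

theorem eq_mul_pow_sub_of_mul_pow_eq {M : Type*} [CommMonoidWithZero M] [IsCancelMulZero M]
    {p m d : M} (hp : p ≠ 0) {n k : ℕ} (hkn : k ≤ n) (h : m * p ^ n = d * p ^ k) :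
    d = m * p ^ (n - k) := by
  rw [← Nat.sub_add_cancel hkn, pow_add, ← mul_assoc] at h
  exact (mul_right_cancel₀ (pow_ne_zero k hp) h).symm

theorem exists_eq_mul_pow_of_pos_of_lt_pow {p B : ℤ} (hp : 1 < p) {k : ℕ} (hB : 0 < B)
    (hBk : B < p ^ k) : ∃ i b, B = b * p ^ i ∧ ¬p ∣ b ∧ i < k ∧ 0 < b ∧ b < p ^ (k - i) := by
  have hp0 : 0 < p := one_pos.trans hp
  have hpu : ¬IsUnit p := by rw [Int.isUnit_iff]; omega
  obtain ⟨i, b, hpb, rfl⟩ := WfDvdMonoid.max_power_factor' hB.ne' hpu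
  have hpi : 0 < p ^ i := pow_pos hp0 i
  have hb : 0 < b := pos_of_mul_pos_right hB hpi.le
  have hik : i < k :=
    (pow_lt_pow_iff_right₀ hp).mp (hBk.trans_le' (le_mul_of_one_le_right hpi.le hb))
  rw [mul_comm] at hBk ⊢
  exact ⟨i, b, rfl, hpb, hik, hb, (mul_pow_lt_pow_iff hp0 hik.le).mp hBk⟩

theorem mul_pow_nonneg_and_lt_pow {R : Type*} [CommSemiring R] [LinearOrder R]
    [IsStrictOrderedRing R] {p b : R} (hp : 0 < p) {i k : ℕ} (hik : i ≤ k) (hb : 0 < b)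
    (hbk : b < p ^ (k - i)) : 0 ≤ b * p ^ i ∧ b * p ^ i < p ^ k :=
  ⟨by positivity, (mul_pow_lt_pow_iff hp hik).mpr hbk⟩

theorem exists_pow_decomposition {p : ℕ} (hp : p.Prime) (hp2 : p ≠ 2) {k : ℕ}
    {B₁ C₁ B₂ C₂ : ℤ} (hE : (p : ℤ) ^ k * C₂ + 4 * B₁ * B₂ - C₁ * (p : ℤ) ^ k = 0)
    (hB₁ : 0 < B₁) (hB₁k : B₁ < (p : ℤ) ^ k) (hB₂ : 0 < -B₂) (hB₂k : -B₂ < (p : ℤ) ^ k) :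
    ∃ i j : ℕ, ∃ b₁ b₂ : ℤ, 0 < i ∧ i < k ∧ 0 < j ∧ j < k ∧ k ≤ i + j ∧
      B₁ = b₁ * (p : ℤ) ^ i ∧ B₂ = b₂ * (p : ℤ) ^ j ∧
      C₁ = C₂ + 4 * b₁ * b₂ * (p : ℤ) ^ (i + j - k) ∧
      0 < b₁ ∧ b₁ < (p : ℤ) ^ (k - i) ∧ ¬(p : ℤ) ∣ b₁ ∧
      0 < -b₂ ∧ -b₂ < (p : ℤ) ^ (k - j) ∧ ¬(p : ℤ) ∣ b₂ := by
  have hpZ : Prime (p : ℤ) := Nat.prime_iff_prime_int.mp hp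
  have hp1 : (1 : ℤ) < p := by exact_mod_cast hp.one_lt
  have hp0 : (0 : ℤ) < p := one_pos.trans hp1
  obtain ⟨i, b₁, rfl, hb₁p, hik, hb₁, hb₁k⟩ := exists_eq_mul_pow_of_pos_of_lt_pow hp1 hB₁ hB₁k
  obtain ⟨j, c, hB₂c, hcp, hjk, hc, hck⟩ := exists_eq_mul_pow_of_pos_of_lt_pow hp1 hB₂ hB₂k
  rw [neg_eq_iff_eq_neg, ← neg_mul] at hB₂c
  subst hB₂c
  have hnd : ¬(p : ℤ) ∣ 4 * b₁ * -c := by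
    simp only [hpZ.dvd_mul, dvd_neg, hp.not_intCast_dvd_four hp2, hb₁p, hcp, or_self,
      not_false_eq_true]
  have h : 4 * b₁ * -c * (p : ℤ) ^ (i + j) = (C₁ - C₂) * (p : ℤ) ^ k := by
    rw [pow_add]; linear_combination hE
  have hij := le_of_mul_pow_eq_mul_pow hp0.ne' hnd h
  have hC := eq_mul_pow_sub_of_mul_pow_eq hp0.ne' hij h
  refine ⟨i, j, b₁, -c, by omega, hik, by omega, hjk, hij, rfl, rfl, by linear_combination hC,
    hb₁, hb₁k, hb₁p, by simpa using hc, by simpa using hck, by simpa using hcp⟩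

/-- The families (1)–(5) of the description of `S(p^k, -p^k)`. -/
def PrimePowerFamilies (p k : ℕ) (B₁ C₁ B₂ C₂ : ℤ) : Prop :=
  (B₁ = 0 ∧ B₂ = 0 ∧ C₁ = C₂ ∧
      0 ≤ -C₂ ∧ -C₂ < 4 * (p : ℤ) ^ k ∧ C₂ ≡ -1 [ZMOD 4] ∧ Int.gcd C₂ p = 1) ∨
    (B₁ = 0 ∧ C₁ = C₂ ∧ 0 < -B₂ ∧ -B₂ < (p : ℤ) ^ k ∧
      0 ≤ -C₂ ∧ -C₂ < 4 * (p : ℤ) ^ k ∧ C₂ ≡ -1 [ZMOD 4] ∧ Int.gcd C₂ p = 1) ∨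
    (B₂ = 0 ∧ C₁ = C₂ ∧ 0 < B₁ ∧ B₁ < (p : ℤ) ^ k ∧
      0 ≤ -C₂ ∧ -C₂ < 4 * (p : ℤ) ^ k ∧ C₂ ≡ -1 [ZMOD 4] ∧ Int.gcd C₂ p = 1) ∨
    (∃ i j : ℕ, ∃ b₁ b₂ : ℤ, 0 < i ∧ i < k ∧ 0 < j ∧ j < k ∧ i + j = k ∧
      B₁ = b₁ * (p : ℤ) ^ i ∧ B₂ = b₂ * (p : ℤ) ^ j ∧ C₁ = C₂ + 4 * b₁ * b₂ ∧
      0 < b₁ ∧ b₁ < (p : ℤ) ^ (k - i) ∧ Int.gcd b₁ p = 1 ∧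
      0 < -b₂ ∧ -b₂ < (p : ℤ) ^ (k - j) ∧ Int.gcd b₂ p = 1 ∧
      0 ≤ -C₂ ∧ -C₂ < 4 * (p : ℤ) ^ k ∧ C₂ ≡ -1 [ZMOD 4] ∧ Int.gcd C₂ p = 1 ∧
      ¬ ((p : ℤ) ∣ (C₂ + 4 * b₁ * b₂))) ∨
    (∃ i j : ℕ, ∃ b₁ b₂ : ℤ, 0 < i ∧ i < k ∧ 0 < j ∧ j < k ∧ k < i + j ∧
      B₁ = b₁ * (p : ℤ) ^ i ∧ B₂ = b₂ * (p : ℤ) ^ j ∧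
      C₁ = C₂ + 4 * b₁ * b₂ * (p : ℤ) ^ (i + j - k) ∧
      0 < b₁ ∧ b₁ < (p : ℤ) ^ (k - i) ∧ Int.gcd b₁ p = 1 ∧
      0 < -b₂ ∧ -b₂ < (p : ℤ) ^ (k - j) ∧ Int.gcd b₂ p = 1 ∧
      0 ≤ -C₂ ∧ -C₂ < 4 * (p : ℤ) ^ k ∧ C₂ ≡ -1 [ZMOD 4] ∧
      Int.gcd C₂ p = 1)

theorem primePowerFamilies_of_mem {p : ℕ} (hp : p.Prime) (hp2 : p ≠ 2) {k : ℕ} (hk : 0 < k)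
    {B₁ C₁ B₂ C₂ : ℤ} (hmem : (B₁, C₁, B₂, C₂) ∈ PlSet ((p : ℤ) ^ k) (-(p : ℤ) ^ k)) :
    PrimePowerFamilies p k B₁ C₁ B₂ C₂ := by
  have hpZ : Prime (p : ℤ) := Nat.prime_iff_prime_int.mp hp
  have hP : (0 : ℤ) < p ^ k := pow_pos (by exact_mod_cast hp.pos) k
  simp only [mem_plSet_neg_iff hP, Int.gcd_pow_gcd_eq_one_iff_of_prime hpZ hk.ne'] at hmem
  obtain ⟨hE, hg₁, hg₂, -, hC₂, ⟨hB₁, hB₁k⟩, ⟨hB₂, hB₂k⟩, hC₂0, hC₂k⟩ := hmem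
  simp only [PrimePowerFamilies, Int.gcd_eq_one_iff_not_dvd_of_prime hpZ]
  have hC₁ (h : B₁ * B₂ = 0) : C₁ = C₂ :=
    mul_right_cancel₀ hP.ne' (by linear_combination (4 : ℤ) * h - hE)
  rcases hB₁.eq_or_lt with rfl | hB₁
  · rcases hB₂.eq_or_lt with h | hB₂
    · obtain rfl : B₂ = 0 := by omega
      exact Or.inl ⟨rfl, rfl, hC₁ (zero_mul _), hC₂0, hC₂k, hC₂, fun h => hg₂ ⟨dvd_zero _, h⟩⟩
    · obtain rfl := hC₁ (zero_mul _)
      exact Or.inr <| Or.inl ⟨rfl, rfl, hB₂, hB₂k, hC₂0, hC₂k, hC₂, fun h => hg₁ ⟨dvd_zero _, h⟩⟩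
  rcases hB₂.eq_or_lt with h | hB₂
  · obtain rfl : B₂ = 0 := by omega
    exact Or.inr <| Or.inr <| Or.inl
      ⟨rfl, hC₁ (mul_zero _), hB₁, hB₁k, hC₂0, hC₂k, hC₂, fun h => hg₂ ⟨dvd_zero _, h⟩⟩
  obtain ⟨i, j, b₁, b₂, hi, hik, hj, hjk, hij, rfl, rfl, rfl, hb₁, hb₁k, hb₁p, hb₂, hb₂k, hb₂p⟩ :=
    exists_pow_decomposition hp hp2 hE hB₁ hB₁k hB₂ hB₂k
  have hC₂p : ¬(p : ℤ) ∣ C₂ := fun h => hg₂ ⟨dvd_mul_of_dvd_right (dvd_pow_self _ hj.ne') _, h⟩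
  rcases hij.eq_or_lt with rfl | hij
  · rw [Nat.sub_self, pow_zero, mul_one] at hg₁ ⊢
    exact Or.inr <| Or.inr <| Or.inr <| Or.inl ⟨i, j, b₁, b₂, hi, hik, hj, hjk, rfl, rfl, rfl, rfl,
      hb₁, hb₁k, hb₁p, hb₂, hb₂k, hb₂p, hC₂0, hC₂k, hC₂, hC₂p,
      fun h => hg₁ ⟨dvd_mul_of_dvd_right (dvd_pow_self _ hi.ne') _, h⟩⟩
  · exact Or.inr <| Or.inr <| Or.inr <| Or.inr ⟨i, j, b₁, b₂, hi, hik, hj, hjk, hij, rfl, rfl, rfl,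
      hb₁, hb₁k, hb₁p, hb₂, hb₂k, hb₂p, hC₂0, hC₂k, hC₂, hC₂p⟩

theorem mem_of_primePowerFamilies {p : ℕ} (hp : p.Prime) {k : ℕ} (hk : 0 < k)
    {B₁ C₁ B₂ C₂ : ℤ} (hE : (p : ℤ) ^ k * C₂ + 4 * B₁ * B₂ - C₁ * (p : ℤ) ^ k = 0)
    (h : PrimePowerFamilies p k B₁ C₁ B₂ C₂) :
    (B₁, C₁, B₂, C₂) ∈ PlSet ((p : ℤ) ^ k) (-(p : ℤ) ^ k) := by
  have hpZ : Prime (p : ℤ) := Nat.prime_iff_prime_int.mp hp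
  have hp0 : (0 : ℤ) < p := by exact_mod_cast hp.pos
  have hP : (0 : ℤ) < p ^ k := pow_pos hp0 k
  simp only [PrimePowerFamilies, Int.gcd_eq_one_iff_not_dvd_of_prime hpZ] at h
  simp only [mem_plSet_neg_iff hP, Int.gcd_pow_gcd_eq_one_iff_of_prime hpZ hk.ne']
  rcases h with h | h | h | h | h
  · obtain ⟨rfl, rfl, rfl, hC₂0, hC₂k, hC₂, hC₂p⟩ := h
    exact ⟨hE, fun h => hC₂p h.2, fun h => hC₂p h.2, hC₂, hC₂, ⟨le_rfl, hP⟩, by simpa using hP,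
      hC₂0, hC₂k⟩
  · obtain ⟨rfl, rfl, hB₂, hB₂k, hC₂0, hC₂k, hC₂, hC₂p⟩ := h
    exact ⟨hE, fun h => hC₂p h.2, fun h => hC₂p h.2, hC₂, hC₂, ⟨le_rfl, hP⟩, ⟨hB₂.le, hB₂k⟩,
      hC₂0, hC₂k⟩
  · obtain ⟨rfl, rfl, hB₁, hB₁k, hC₂0, hC₂k, hC₂, hC₂p⟩ := h
    exact ⟨hE, fun h => hC₂p h.2, fun h => hC₂p h.2, hC₂, hC₂, ⟨hB₁.le, hB₁k⟩, by simpa using hP,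
      hC₂0, hC₂k⟩
  · obtain ⟨i, j, b₁, b₂, -, hik, -, hjk, -, rfl, rfl, rfl, hb₁, hb₁k, -, hb₂, hb₂k, -,
      hC₂0, hC₂k, hC₂, hC₂p, hC₁p⟩ := h
    refine ⟨hE, fun h => hC₁p h.2, fun h => hC₂p h.2,
      by simpa only [mul_assoc] using Int.modEq_add_fac_self.trans hC₂, hC₂,
      mul_pow_nonneg_and_lt_pow hp0 hik.le hb₁ hb₁k, ?_, hC₂0, hC₂k⟩
    simpa only [neg_mul] using mul_pow_nonneg_and_lt_pow hp0 hjk.le hb₂ hb₂k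
  · obtain ⟨i, j, b₁, b₂, -, hik, -, hjk, hij, rfl, rfl, rfl, hb₁, hb₁k, -, hb₂, hb₂k, -,
      hC₂0, hC₂k, hC₂, hC₂p⟩ := h
    have hpC : (p : ℤ) ∣ 4 * b₁ * b₂ * (p : ℤ) ^ (i + j - k) :=
      dvd_mul_of_dvd_right (dvd_pow_self _ (by omega)) _
    refine ⟨hE, fun h => hC₂p ((dvd_add_left hpC).mp h.2), fun h => hC₂p h.2,
      by simpa only [mul_assoc] using Int.modEq_add_fac_self.trans hC₂,
      hC₂, mul_pow_nonneg_and_lt_pow hp0 hik.le hb₁ hb₁k, ?_, hC₂0, hC₂k⟩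
    simpa only [neg_mul] using mul_pow_nonneg_and_lt_pow hp0 hjk.le hb₂ hb₂k

/-- Explicit description of `S(p^k, -p^k)` for an odd prime `p` and `k > 0`. -/
theorem plset_equal_prime_power_description (p : ℕ) (hp : p.Prime) (hp2 : p ≠ 2)
    (k : ℕ) (hk : 0 < k) :
    ∀ B₁ C₁ B₂ C₂ : ℤ,
      (B₁, C₁, B₂, C₂) ∈ PlSet ((p : ℤ) ^ k) (-(p : ℤ) ^ k) ↔
        ((p : ℤ) ^ k * C₂ + 4 * B₁ * B₂ - C₁ * (p : ℤ) ^ k = 0 ∧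
          ((B₁ = 0 ∧ B₂ = 0 ∧ C₁ = C₂ ∧
              0 ≤ -C₂ ∧ -C₂ < 4 * (p : ℤ) ^ k ∧ C₂ ≡ -1 [ZMOD 4] ∧ Int.gcd C₂ p = 1) ∨
           (B₁ = 0 ∧ C₁ = C₂ ∧ 0 < -B₂ ∧ -B₂ < (p : ℤ) ^ k ∧
              0 ≤ -C₂ ∧ -C₂ < 4 * (p : ℤ) ^ k ∧ C₂ ≡ -1 [ZMOD 4] ∧ Int.gcd C₂ p = 1) ∨
           (B₂ = 0 ∧ C₁ = C₂ ∧ 0 < B₁ ∧ B₁ < (p : ℤ) ^ k ∧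
              0 ≤ -C₂ ∧ -C₂ < 4 * (p : ℤ) ^ k ∧ C₂ ≡ -1 [ZMOD 4] ∧ Int.gcd C₂ p = 1) ∨
           (∃ i j : ℕ, ∃ b₁ b₂ : ℤ, 0 < i ∧ i < k ∧ 0 < j ∧ j < k ∧ i + j = k ∧
              B₁ = b₁ * (p : ℤ) ^ i ∧ B₂ = b₂ * (p : ℤ) ^ j ∧ C₁ = C₂ + 4 * b₁ * b₂ ∧
              0 < b₁ ∧ b₁ < (p : ℤ) ^ (k - i) ∧ Int.gcd b₁ p = 1 ∧
              0 < -b₂ ∧ -b₂ < (p : ℤ) ^ (k - j) ∧ Int.gcd b₂ p = 1 ∧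
              0 ≤ -C₂ ∧ -C₂ < 4 * (p : ℤ) ^ k ∧ C₂ ≡ -1 [ZMOD 4] ∧ Int.gcd C₂ p = 1 ∧
              ¬ ((p : ℤ) ∣ (C₂ + 4 * b₁ * b₂))) ∨
           (∃ i j : ℕ, ∃ b₁ b₂ : ℤ, 0 < i ∧ i < k ∧ 0 < j ∧ j < k ∧ k < i + j ∧
              B₁ = b₁ * (p : ℤ) ^ i ∧ B₂ = b₂ * (p : ℤ) ^ j ∧
              C₁ = C₂ + 4 * b₁ * b₂ * (p : ℤ) ^ (i + j - k) ∧
              0 < b₁ ∧ b₁ < (p : ℤ) ^ (k - i) ∧ Int.gcd b₁ p = 1 ∧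
              0 < -b₂ ∧ -b₂ < (p : ℤ) ^ (k - j) ∧ Int.gcd b₂ p = 1 ∧
              0 ≤ -C₂ ∧ -C₂ < 4 * (p : ℤ) ^ k ∧ C₂ ≡ -1 [ZMOD 4] ∧
              Int.gcd C₂ p = 1))) := by
  intro B₁ C₁ B₂ C₂
  have hP : (0 : ℤ) < p ^ k := pow_pos (by exact_mod_cast hp.pos) k
  exact ⟨fun hmem => ⟨((mem_plSet_neg_iff hP).mp hmem).1,
    primePowerFamilies_of_mem hp hp2 hk hmem⟩, fun ⟨hE, h⟩ => mem_of_primePowerFamilies hp hk hE h⟩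
end

section
/- Let k > ℓ ≥ 2 be integers and μ = ±1. Then S(2^k, μ2^ℓ) consists precisely of the tuples (B₁, C₁, B₂, C₂) of the form B₁ = 2^i b₁, B₂ = 2^j b₂, with C₁ the unique integer determined by 2^kC₂ + 4B₁B₂ + C₁μ2^ℓ = 0, where: 0 ≤ i < k and 0 ≤ j < ℓ with i + j = ℓ − 2; 0 ≤ μC₂ < 2^{ℓ+2} with C₂ ≡ −1 (mod 4); 0 ≤ b₁ < 2^{k−i} with b₁ odd; 0 ≤ μb₂ < 2^{ℓ−j} with b₂ odd; and b₁b₂ ≡ μ + 2^{k−ℓ} (mod 4). Moreover S(2^k, μ2^ℓ) is empty when ℓ ∈ {0,1}. -/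
namespace Int

lemma odd_of_modEq_neg_one_four {C : ℤ} (h : C ≡ -1 [ZMOD 4]) : Odd C := by
  unfold Int.ModEq at h
  rw [Int.odd_iff]
  omega

lemma exists_eq_two_pow_mul_odd {x : ℤ} (hx : x ≠ 0) :
    ∃ (i : ℕ) (b : ℤ), Odd b ∧ x = 2 ^ i * b := by
  obtain ⟨b, hx, hb⟩ := FiniteMultiplicity.exists_eq_pow_mul_and_not_dvd
    (Int.finiteMultiplicity_iff.mpr ⟨by decide, hx⟩ : FiniteMultiplicity (2 : ℤ) x)
  exact ⟨_, b, Int.not_even_iff_odd.mp (by rwa [even_iff_two_dvd]), hx⟩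

lemma eq_of_two_pow_mul_odd_eq {m n : ℕ} {u v : ℤ} (hu : Odd u) (hv : Odd v)
    (h : 2 ^ m * u = 2 ^ n * v) : m = n ∧ u = v := by
  wlog hmn : m ≤ n generalizing m n u v
  · obtain ⟨hnm, hvu⟩ := this hv hu h.symm (by omega)
    exact ⟨hnm.symm, hvu.symm⟩
  have hu' : u = 2 ^ (n - m) * v := by
    apply mul_left_cancel₀ (pow_ne_zero m two_ne_zero)
    rw [h, ← mul_assoc, ← pow_add, Nat.add_sub_cancel' hmn]
  obtain rfl : m = n := by
    by_contra hne
    rw [hu', Int.odd_mul, Int.odd_pow] at hu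
    norm_num at hu
    omega
  simpa using hu'

lemma gcd_gcd_eq_one_of_dvd_two_pow_of_odd {a B C : ℤ} {m : ℕ} (ha : a ∣ 2 ^ m) (hC : Odd C) :
    Int.gcd a (Int.gcd B C) = 1 :=
  Int.isCoprime_iff_gcd_eq_one.mp <|
    ((Int.isCoprime_two_left.mpr hC).pow_left.of_isCoprime_of_dvd_left ha).of_isCoprime_of_dvd_right
      (Int.gcd_dvd_right B C)

end Int

section Normalization

variable {K : Type*} [Field K] [LinearOrder K] [IsStrictOrderedRing K]

lemma div_nonneg_and_div_lt_one_iff_s11 {x c : K} (hc : 0 < c) :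
    (0 ≤ x / c ∧ x / c < 1) ↔ (0 ≤ x ∧ x < c) := by
  rw [le_div_iff₀ hc, zero_mul, div_lt_one hc]

lemma div_sign_mul_nonneg_and_lt_one_iff {μ x c : K} (hμ : μ = 1 ∨ μ = -1) (hc : 0 < c) :
    (0 ≤ x / (μ * c) ∧ x / (μ * c) < 1) ↔ (0 ≤ μ * x ∧ μ * x < c) := by
  have hdiv : x / (μ * c) = μ * x / c := by
    rcases hμ with rfl | rfl <;> field_simp
  rw [hdiv, div_nonneg_and_div_lt_one_iff_s11 hc]

end Normalization

lemma pow_mul_nonneg_and_lt_pow_iff {R : Type*} [CommSemiring R] [LinearOrder R]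
    [IsStrictOrderedRing R] {p b : R} {i k : ℕ} (hp : 0 < p) (hik : i ≤ k) :
    (0 ≤ p ^ i * b ∧ p ^ i * b < p ^ k) ↔ (0 ≤ b ∧ b < p ^ (k - i)) := by
  have hpi : 0 < p ^ i := pow_pos hp i
  rw [← Nat.add_sub_cancel' hik, pow_add, Nat.add_sub_cancel_left,
    mul_nonneg_iff_of_pos_left hpi, mul_lt_mul_iff_right₀ hpi]

lemma modEq_neg_one_four_iff {μ C₁ C₂ w : ℤ} {n : ℕ} (hμ : μ = 1 ∨ μ = -1)
    (hC₂ : C₂ ≡ -1 [ZMOD 4]) (h : C₁ * μ = -(2 ^ n * C₂ + w)) :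
    C₁ ≡ -1 [ZMOD 4] ↔ w ≡ μ + 2 ^ n [ZMOD 4] := by
  have h2C₂ : 2 ^ n * C₂ ≡ 2 ^ n * -1 [ZMOD 4] := hC₂.mul_left _
  unfold Int.ModEq at *
  generalize 2 ^ n * C₂ = X at h h2C₂
  generalize (2 : ℤ) ^ n = P at h h2C₂ ⊢
  rcases hμ with rfl | rfl <;> omega

lemma mem_plSet_two_pow_iff {k ℓ : ℕ} {μ B₁ C₁ B₂ C₂ : ℤ} (hμ : μ = 1 ∨ μ = -1) :
    (B₁, C₁, B₂, C₂) ∈ PlSet (2 ^ k) (μ * 2 ^ ℓ) ↔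
      C₁ * (μ * 2 ^ ℓ) = -(2 ^ k * C₂ + 4 * B₁ * B₂) ∧ C₁ ≡ -1 [ZMOD 4] ∧ C₂ ≡ -1 [ZMOD 4] ∧
        (0 ≤ B₁ ∧ B₁ < 2 ^ k) ∧ (0 ≤ μ * B₂ ∧ μ * B₂ < 2 ^ ℓ) ∧
        (0 ≤ μ * C₂ ∧ μ * C₂ < 2 ^ (ℓ + 2)) := by
  have hμℚ : (μ : ℚ) = 1 ∨ (μ : ℚ) = -1 := by rcases hμ with rfl | rfl <;> simp
  have hB₁_iff : (0 ≤ (B₁ : ℚ) / 2 ^ k ∧ (B₁ : ℚ) / 2 ^ k < 1) ↔ (0 ≤ B₁ ∧ B₁ < 2 ^ k) := by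
    rw [div_nonneg_and_div_lt_one_iff_s11 (by positivity)]
    norm_cast
  have hB₂_iff : (0 ≤ (B₂ : ℚ) / (μ * 2 ^ ℓ) ∧ (B₂ : ℚ) / (μ * 2 ^ ℓ) < 1) ↔
      (0 ≤ μ * B₂ ∧ μ * B₂ < 2 ^ ℓ) := by
    rw [div_sign_mul_nonneg_and_lt_one_iff hμℚ (by positivity)]
    norm_cast
  have hC₂_iff : (0 ≤ (C₂ : ℚ) / (4 * (μ * 2 ^ ℓ)) ∧ (C₂ : ℚ) / (4 * (μ * 2 ^ ℓ)) < 1) ↔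
      (0 ≤ μ * C₂ ∧ μ * C₂ < 2 ^ (ℓ + 2)) := by
    rw [show (4 : ℚ) * (μ * 2 ^ ℓ) = μ * 2 ^ (ℓ + 2) by ring]
    rw [div_sign_mul_nonneg_and_lt_one_iff hμℚ (by positivity)]
    norm_cast
  have hdvd : μ * 2 ^ ℓ ∣ 2 ^ ℓ := (Int.isUnit_iff.mpr hμ).mul_left_dvd.mpr dvd_rfl
  simp only [PlSet, Set.mem_ofPred_eq]
  push_cast
  constructor
  · rintro ⟨heq, -, -, hC₁, hC₂, hB₁₀, hB₁₁, hB₂₀, hB₂₁, hC₂₀, hC₂₁⟩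
    exact ⟨by linear_combination heq, hC₁, hC₂, hB₁_iff.mp ⟨hB₁₀, hB₁₁⟩,
      hB₂_iff.mp ⟨hB₂₀, hB₂₁⟩, hC₂_iff.mp ⟨hC₂₀, hC₂₁⟩⟩
  · rintro ⟨heq, hC₁, hC₂, hB₁, hB₂, hC₂r⟩
    exact ⟨by linear_combination heq,
      Int.gcd_gcd_eq_one_of_dvd_two_pow_of_odd dvd_rfl (Int.odd_of_modEq_neg_one_four hC₁),
      Int.gcd_gcd_eq_one_of_dvd_two_pow_of_odd hdvd (Int.odd_of_modEq_neg_one_four hC₂),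
      hC₁, hC₂, (hB₁_iff.mpr hB₁).1, (hB₁_iff.mpr hB₁).2, (hB₂_iff.mpr hB₂).1, (hB₂_iff.mpr hB₂).2,
      (hC₂_iff.mpr hC₂r).1, (hC₂_iff.mpr hC₂r).2⟩

section OddParts

variable {k ℓ : ℕ} {μ B₁ C₁ B₂ C₂ : ℤ}

lemma eq_iff_odd_parts_eq {i j : ℕ} {b₁ b₂ : ℤ} (hij : i + j + 2 = ℓ) (hℓk : ℓ ≤ k) :
    C₁ * (μ * 2 ^ ℓ) = -(2 ^ k * C₂ + 4 * (2 ^ i * b₁) * (2 ^ j * b₂)) ↔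
      C₁ * μ = -(2 ^ (k - ℓ) * C₂ + b₁ * b₂) := by
  have hk : (2 : ℤ) ^ k = 2 ^ ℓ * 2 ^ (k - ℓ) := by rw [← pow_add, Nat.add_sub_cancel' hℓk]
  have hB : 4 * (2 ^ i * b₁) * (2 ^ j * b₂) = 2 ^ ℓ * (b₁ * b₂) := by rw [← hij]; ring
  rw [hk, hB]
  constructor
  · intro h
    apply mul_left_cancel₀ (pow_ne_zero ℓ (two_ne_zero' ℤ))
    linear_combination h
  · intro h
    linear_combination 2 ^ ℓ * h

lemma exists_odd_parts_of_eq (hℓk : ℓ < k) (hμ : Odd μ) (hC₁ : Odd C₁)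
    (h : C₁ * (μ * 2 ^ ℓ) = -(2 ^ k * C₂ + 4 * B₁ * B₂)) :
    ∃ (i j : ℕ) (b₁ b₂ : ℤ), Odd b₁ ∧ Odd b₂ ∧ B₁ = 2 ^ i * b₁ ∧ B₂ = 2 ^ j * b₂ ∧
      i + j + 2 = ℓ ∧ C₁ * μ = -(2 ^ (k - ℓ) * C₂ + b₁ * b₂) := by
  have hk : (2 : ℤ) ^ k = 2 ^ ℓ * 2 ^ (k - ℓ) := by rw [← pow_add, Nat.add_sub_cancel' hℓk.le]
  have hW : Odd (-(2 ^ (k - ℓ) * C₂ + C₁ * μ)) :=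
    (((Int.even_pow.mpr ⟨even_two, by omega⟩).mul_right C₂).add_odd (hC₁.mul hμ)).neg
  have hBW : 2 ^ 2 * (B₁ * B₂) = 2 ^ ℓ * -(2 ^ (k - ℓ) * C₂ + C₁ * μ) := by
    rw [hk] at h
    linear_combination h
  have hB : B₁ ≠ 0 ∧ B₂ ≠ 0 := by
    have hW0 : -(2 ^ (k - ℓ) * C₂ + C₁ * μ) ≠ 0 := fun h0 ↦ by simp [h0] at hW
    have : 2 ^ 2 * (B₁ * B₂) ≠ 0 := hBW ▸ mul_ne_zero (pow_ne_zero ℓ two_ne_zero) hW0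
    simpa [not_or] using this
  obtain ⟨i, b₁, hb₁, rfl⟩ := Int.exists_eq_two_pow_mul_odd hB.1
  obtain ⟨j, b₂, hb₂, rfl⟩ := Int.exists_eq_two_pow_mul_odd hB.2
  have hBW' : 2 ^ (i + j + 2) * (b₁ * b₂) = 2 ^ ℓ * -(2 ^ (k - ℓ) * C₂ + C₁ * μ) := by
    linear_combination hBW
  obtain ⟨hij, hb⟩ := Int.eq_of_two_pow_mul_odd_eq (hb₁.mul hb₂) hW hBW'
  exact ⟨i, j, b₁, b₂, hb₁, hb₂, rfl, rfl, hij, by linear_combination hb⟩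

end OddParts

lemma mem_plSet_two_pow_iff_of_two_le {k ℓ : ℕ} {μ B₁ C₁ B₂ C₂ : ℤ} (hℓ : 2 ≤ ℓ) (hℓk : ℓ < k)
    (hμ : μ = 1 ∨ μ = -1) :
    (B₁, C₁, B₂, C₂) ∈ PlSet (2 ^ k) (μ * 2 ^ ℓ) ↔
      (C₁ * (μ * 2 ^ ℓ) = -(2 ^ k * C₂ + 4 * B₁ * B₂) ∧
        ∃ i j : ℕ, ∃ b₁ b₂ : ℤ, i < k ∧ j < ℓ ∧ i + j = ℓ - 2 ∧
          B₁ = 2 ^ i * b₁ ∧ B₂ = 2 ^ j * b₂ ∧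
          0 ≤ μ * C₂ ∧ μ * C₂ < 2 ^ (ℓ + 2) ∧ C₂ ≡ -1 [ZMOD 4] ∧
          0 ≤ b₁ ∧ b₁ < 2 ^ (k - i) ∧ Odd b₁ ∧
          0 ≤ μ * b₂ ∧ μ * b₂ < 2 ^ (ℓ - j) ∧ Odd b₂ ∧
          b₁ * b₂ ≡ μ + 2 ^ (k - ℓ) [ZMOD 4]) := by
  have hμodd : Odd μ := by rcases hμ with rfl | rfl <;> decide
  rw [mem_plSet_two_pow_iff hμ]
  constructor
  · rintro ⟨heq, hC₁, hC₂, hB₁, hB₂, hC₂r⟩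
    obtain ⟨i, j, b₁, b₂, hb₁, hb₂, rfl, rfl, hij, hodd⟩ :=
      exists_odd_parts_of_eq hℓk hμodd (Int.odd_of_modEq_neg_one_four hC₁) heq
    rw [mul_left_comm] at hB₂
    obtain ⟨hb₁0, hb₁lt⟩ := (pow_mul_nonneg_and_lt_pow_iff two_pos (by omega)).mp hB₁
    obtain ⟨hb₂0, hb₂lt⟩ := (pow_mul_nonneg_and_lt_pow_iff two_pos (by omega)).mp hB₂
    exact ⟨heq, i, j, b₁, b₂, by omega, by omega, by omega, rfl, rfl, hC₂r.1, hC₂r.2, hC₂,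
      hb₁0, hb₁lt, hb₁, hb₂0, hb₂lt, hb₂, (modEq_neg_one_four_iff hμ hC₂ hodd).mp hC₁⟩
  · rintro ⟨heq, i, j, b₁, b₂, hik, hjℓ, hij, rfl, rfl, hC₂0, hC₂lt, hC₂, hb₁0, hb₁lt, -,
      hb₂0, hb₂lt, -, hb⟩
    have hodd := (eq_iff_odd_parts_eq (by omega) hℓk.le).mp heq
    refine ⟨heq, (modEq_neg_one_four_iff hμ hC₂ hodd).mpr hb, hC₂,
      (pow_mul_nonneg_and_lt_pow_iff two_pos hik.le).mpr ⟨hb₁0, hb₁lt⟩, ?_, hC₂0, hC₂lt⟩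
    rw [mul_left_comm]
    exact (pow_mul_nonneg_and_lt_pow_iff two_pos hjℓ.le).mpr ⟨hb₂0, hb₂lt⟩

lemma plSet_two_pow_eq_empty {k ℓ : ℕ} {μ : ℤ} (hℓ : ℓ < 2) (hℓk : ℓ < k) (hμ : μ = 1 ∨ μ = -1) :
    PlSet (2 ^ k) (μ * 2 ^ ℓ) = ∅ := by
  have hμodd : Odd μ := by rcases hμ with rfl | rfl <;> decide
  refine Set.eq_empty_of_forall_notMem fun ⟨B₁, C₁, B₂, C₂⟩ hmem ↦ ?_
  obtain ⟨heq, hC₁, -⟩ := (mem_plSet_two_pow_iff hμ).mp hmem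
  obtain ⟨i, j, -, -, -, -, -, -, hij, -⟩ :=
    exists_odd_parts_of_eq hℓk hμodd (Int.odd_of_modEq_neg_one_four hC₁) heq
  omega

/-- Explicit description of `S(2^k, μ2^ℓ)` for `k > ℓ ≥ 2`, and its emptiness
for `ℓ ∈ {0,1}`. -/
theorem plset_two_power_description (k ℓ : ℕ) (hkℓ : ℓ < k)
    (μ : ℤ) (hμ : μ = 1 ∨ μ = -1) :
    (2 ≤ ℓ → ∀ B₁ C₁ B₂ C₂ : ℤ,
      (B₁, C₁, B₂, C₂) ∈ PlSet ((2 : ℤ) ^ k) (μ * (2 : ℤ) ^ ℓ) ↔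
        (C₁ * (μ * (2 : ℤ) ^ ℓ) = -((2 : ℤ) ^ k * C₂ + 4 * B₁ * B₂) ∧
          ∃ i j : ℕ, ∃ b₁ b₂ : ℤ, i < k ∧ j < ℓ ∧ i + j = ℓ - 2 ∧
            B₁ = (2 : ℤ) ^ i * b₁ ∧ B₂ = (2 : ℤ) ^ j * b₂ ∧
            0 ≤ μ * C₂ ∧ μ * C₂ < (2 : ℤ) ^ (ℓ + 2) ∧ C₂ ≡ -1 [ZMOD 4] ∧
            0 ≤ b₁ ∧ b₁ < (2 : ℤ) ^ (k - i) ∧ Odd b₁ ∧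
            0 ≤ μ * b₂ ∧ μ * b₂ < (2 : ℤ) ^ (ℓ - j) ∧ Odd b₂ ∧
            b₁ * b₂ ≡ μ + (2 : ℤ) ^ (k - ℓ) [ZMOD 4])) ∧
    ((ℓ = 0 ∨ ℓ = 1) → PlSet ((2 : ℤ) ^ k) (μ * (2 : ℤ) ^ ℓ) = ∅) :=
  ⟨fun hℓ _ _ _ _ ↦ mem_plSet_two_pow_iff_of_two_le hℓ hkℓ hμ,
    fun hℓ ↦ plSet_two_pow_eq_empty (by omega) hkℓ hμ⟩
end

section
/- Let p be an odd prime, k ∈ ℤ_{>0}, μ = ±1, and m₁, m₂ ∈ ℤ. Then: Σ(1,−1; m₁,m₂) = 1; Σ(1,1; m₁,m₂) = 0; if p^k ≡ μ (mod 4) then Σ(p^k, μ; m₁,m₂) = 0; and if p^k ≡ −μ (mod 4) then Σ(p^k, μ; m₁,m₂) = g(p^k, m₁, p^k). -/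
/-- The splitting `s` in Plücker coordinates. -/
def ssplit (A₁ A₂ : ℤ) (v : ℤ × ℤ × ℤ × ℤ) : ℤ :=
  let D : ℤ := Int.gcd A₁ A₂
  let D₁ : ℤ := Int.gcd D v.1
  let D₂ : ℤ := D / D₁
  kron (kron (-1) (v.1 / D₁)) (-(A₁ * A₂)) * kron (A₁ / D) (A₂ / D) *
    kron (v.1 / D₁) (A₁ / D) * kron (4 * v.2.2.1 / D₂) (A₂.sign * A₂ / D) *
    kron D₁ v.2.1 * kron D₂ v.2.2.2

/-- The exponential sum `Σ(A₁,A₂;m₁,m₂)`. -/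
noncomputable def SigmaExp (A₁ A₂ m₁ m₂ : ℤ) : ℂ :=
  ∑' v : ↥(PlSet A₁ A₂),
    (ssplit A₁ A₂ v.val : ℂ) *
      e2pi ((m₁ : ℚ) * ((v.val.1 : ℚ) / (A₁ : ℚ)) + (m₂ : ℚ) * ((v.val.2.2.1 : ℚ) / (A₂ : ℚ)))

/-- The Gauss sum `g(p^j, m, p^t)`, summing over the units of `ℤ/p^tℤ`. -/
noncomputable def gaussG (p j : ℕ) (m : ℚ) (t : ℕ) : ℂ :=
  ∑ x ∈ Finset.filter (fun x => Nat.gcd x (p ^ t) = 1) (Finset.range (p ^ t)),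
    (kron (x : ℤ) (p : ℤ) ^ j : ℂ) * e2pi (m * (x : ℚ) / ((p : ℚ) ^ t))

lemma kron_one_left (n : ℤ) : kron 1 n = 1 := by
  have : ∀ p, kronPrime 1 p = 1 := fun p => by
    unfold kronPrime; split_ifs <;> simp_all
  simp [kron, this]

lemma kron_one_right (a : ℤ) : kron a 1 = 1 := by simp [kron]

lemma kron_neg_one_right {a : ℤ} (ha : 0 ≤ a) : kron a (-1) = 1 := by
  simp [kron, ha.not_gt]

lemma kronPrime_neg_one_left_eq_one_or_neg_one (p : ℕ) :
    kronPrime (-1) p = 1 ∨ kronPrime (-1) p = -1 := by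
  unfold kronPrime
  split_ifs with h2 h0 h8
  · norm_num at h0
  · exact Or.inl rfl
  · norm_num at h8
  · exact jacobiSym.eq_one_or_neg_one (Int.gcd_neg ▸ Int.gcd_one_left _)

lemma kron_neg_one_left_eq_one_or_neg_one (b : ℤ) : kron (-1) b = 1 ∨ kron (-1) b = -1 := by
  rw [← Int.isUnit_iff]
  have hprod : IsUnit (b.natAbs.factorization.prod fun p e => kronPrime (-1) p ^ e) :=
    Finset.prod_induction _ IsUnit (fun _ _ => IsUnit.mul) isUnit_one
      fun p _ => (Int.isUnit_iff.mpr (kronPrime_neg_one_left_eq_one_or_neg_one p)).pow _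
  unfold kron
  split_ifs <;> simp_all

lemma jacobiSym_mul_right_of_coprime (a : ℤ) {x y : ℕ} (hxy : x.Coprime y) :
    jacobiSym a (x * y) = jacobiSym a x * jacobiSym a y := by
  rcases eq_or_ne x 0 with rfl | hx
  · simp [(Nat.coprime_zero_left _).mp hxy]
  rcases eq_or_ne y 0 with rfl | hy
  · simp [(Nat.coprime_zero_right _).mp hxy]
  exact jacobiSym.mul_right' a hx hy

lemma kron_natCast_of_odd_s12 (a : ℤ) {n : ℕ} (hn : Odd n) : kron a n = jacobiSym a n := by
  have hn0 : n ≠ 0 := hn.pos.ne'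
  rw [Nat.multiplicative_factorization (jacobiSym a)
      (fun _ _ => jacobiSym_mul_right_of_coprime a) (jacobiSym.one_right a) hn0]
  simp only [kron, Nat.cast_eq_zero, hn0, Int.natAbs_natCast, if_false, Nat.cast_nonneg,
    not_lt.mpr, and_false, one_mul]
  refine Finsupp.prod_congr fun p hp => ?_
  have hp2 : p ≠ 2 := by
    rintro rfl
    exact (Nat.not_even_iff_odd.mpr hn) (even_iff_two_dvd.mpr (Nat.dvd_of_mem_primeFactors hp))
  rw [kronPrime, if_neg hp2, jacobiSym.pow_right]

lemma kron_neg_natCast_of_odd {a : ℤ} (ha : a < 0) {n : ℕ} (hn : Odd n) :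
    kron a (-n) = -jacobiSym a n := by
  have hpos : (0 : ℤ) < n := by exact_mod_cast hn.pos
  rw [← kron_natCast_of_odd_s12 a hn]
  simp only [kron, neg_eq_zero, hpos.ne', if_false, Int.natAbs_neg, ha, true_and, neg_lt_zero,
    hpos, hpos.not_gt]
  simp

lemma kron_neg_one_left_neg_mul_of_modEq {A : ℕ} (hA : Odd A) {μ : ℤ}
    (hμ : μ = 1 ∨ μ = -1) (hmod : (A : ℤ) ≡ -μ [ZMOD 4]) : kron (-1) (-(A * μ)) = 1 := by
  rw [Int.ModEq] at hmod
  rcases hμ with rfl | rfl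
  · rw [mul_one, kron_neg_natCast_of_odd (by norm_num) hA, jacobiSym.at_neg_one hA,
      ZMod.χ₄_nat_three_mod_four (by omega)]
    rfl
  · rw [mul_neg_one, neg_neg, kron_natCast_of_odd_s12 _ hA, jacobiSym.at_neg_one hA,
      ZMod.χ₄_nat_one_mod_four (by omega)]

lemma ratCast_div_mem_Ico_iff_of_pos {x d : ℤ} (hd : 0 < d) :
    (0 ≤ (x : ℚ) / d ∧ (x : ℚ) / d < 1) ↔ 0 ≤ x ∧ x < d := by
  have hd' : (0 : ℚ) < d := by exact_mod_cast hd
  rw [div_nonneg_iff, div_lt_one hd']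
  norm_cast
  omega

lemma ratCast_div_mem_Ico_iff_of_neg {x d : ℤ} (hd : d < 0) :
    (0 ≤ (x : ℚ) / d ∧ (x : ℚ) / d < 1) ↔ d < x ∧ x ≤ 0 := by
  have h := ratCast_div_mem_Ico_iff_of_pos (x := -x) (neg_pos.2 hd)
  push_cast at h
  rw [neg_div_neg_eq] at h
  rw [h]
  omega

lemma ratCast_div_unit_mem_Ico_iff {μ : ℤ} (hμ : μ = 1 ∨ μ = -1) (x : ℤ) :
    (0 ≤ (x : ℚ) / μ ∧ (x : ℚ) / μ < 1) ↔ x = 0 := by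
  rcases hμ with rfl | rfl
  · rw [ratCast_div_mem_Ico_iff_of_pos one_pos]; omega
  · rw [ratCast_div_mem_Ico_iff_of_neg (by norm_num)]; omega

lemma ratCast_div_four_unit_mem_Ico_iff {μ : ℤ} (hμ : μ = 1 ∨ μ = -1) {x : ℤ}
    (hx : x ≡ -1 [ZMOD 4]) :
    (0 ≤ (x : ℚ) / (4 * μ) ∧ (x : ℚ) / (4 * μ) < 1) ↔ x = 2 * μ + 1 := by
  rw [Int.ModEq] at hx
  rw [show (4 : ℚ) * μ = ((4 * μ : ℤ) : ℚ) by push_cast; ring]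
  rcases hμ with rfl | rfl
  · rw [ratCast_div_mem_Ico_iff_of_pos (by norm_num)]; omega
  · rw [ratCast_div_mem_Ico_iff_of_neg (by norm_num)]; omega

lemma Int.gcd_gcd_mul_left_self (a b c : ℤ) : Int.gcd a (Int.gcd b (c * a)) = Int.gcd a b := by
  rw [Int.gcd_comm b, ← Int.gcd_assoc, Int.gcd_mul_left_right]
  simp [Int.gcd_eq_natAbs_gcd_natAbs, Int.natAbs_abs]

lemma mem_plSet_unit_iff {A : ℕ} (hA : 0 < A) {μ : ℤ} (hμ : μ = 1 ∨ μ = -1)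
    {B₁ C₁ B₂ C₂ : ℤ} :
    (B₁, C₁, B₂, C₂) ∈ PlSet A μ ↔ (A : ℤ) ≡ -μ [ZMOD 4] ∧ (0 ≤ B₁ ∧ B₁ < A ∧ Int.gcd A B₁ = 1) ∧
      C₁ = -(2 + μ) * A ∧ B₂ = 0 ∧ C₂ = 2 * μ + 1 := by
  have hA' : (0 : ℤ) < A := by exact_mod_cast hA
  simp only [PlSet, Set.mem_ofPred_eq]
  constructor
  · rintro ⟨heq, hgcd, -, hC₁, hC₂, hB₁, hB₁', hB₂, hB₂', hC₂₀, hC₂₀'⟩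
    obtain rfl := (ratCast_div_unit_mem_Ico_iff hμ B₂).1 ⟨hB₂, hB₂'⟩
    obtain rfl := (ratCast_div_four_unit_mem_Ico_iff hμ hC₂).1 ⟨hC₂₀, hC₂₀'⟩
    have hC₁' : C₁ = -(2 + μ) * A := by rcases hμ with rfl | rfl <;> linarith
    subst hC₁'
    rw [Int.gcd_gcd_mul_left_self] at hgcd
    obtain ⟨hB₁₀, hB₁A⟩ := (ratCast_div_mem_Ico_iff_of_pos hA').1 ⟨hB₁, hB₁'⟩
    refine ⟨?_, ⟨hB₁₀, hB₁A, hgcd⟩, rfl, rfl, rfl⟩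
    rw [Int.ModEq] at hC₁ ⊢
    rcases hμ with rfl | rfl <;> omega
  · rintro ⟨hmod, ⟨hB₁, hB₁', hgcd⟩, rfl, rfl, rfl⟩
    have hB₁Q := (ratCast_div_mem_Ico_iff_of_pos hA').2 ⟨hB₁, hB₁'⟩
    have hB₂Q := (ratCast_div_unit_mem_Ico_iff hμ 0).2 rfl
    have hC₂Q := (ratCast_div_four_unit_mem_Ico_iff hμ (x := 2 * μ + 1)
      (by rcases hμ with rfl | rfl <;> decide)).2 rfl
    refine ⟨by rcases hμ with rfl | rfl <;> ring, by rwa [Int.gcd_gcd_mul_left_self],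
      by rcases hμ with rfl | rfl <;> simp, ?_, by rcases hμ with rfl | rfl <;> decide,
      hB₁Q.1, hB₁Q.2, hB₂Q.1, hB₂Q.2, hC₂Q.1, hC₂Q.2⟩
    rw [Int.ModEq] at hmod ⊢
    rcases hμ with rfl | rfl <;> omega

def plTuple (A μ : ℤ) (x : ℕ) : ℤ × ℤ × ℤ × ℤ := (x, -(2 + μ) * A, 0, 2 * μ + 1)

lemma plTuple_injective (A μ : ℤ) : Function.Injective (plTuple A μ) := fun x y h => by
  simpa [plTuple] using congrArg Prod.fst h

lemma plSet_unit_eq_image {A : ℕ} (hA : 0 < A) {μ : ℤ} (hμ : μ = 1 ∨ μ = -1)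
    (hmod : (A : ℤ) ≡ -μ [ZMOD 4]) :
    PlSet A μ =
      ↑(((Finset.range A).filter (fun x => Nat.gcd x A = 1)).image (plTuple A μ)) := by
  ext ⟨B₁, C₁, B₂, C₂⟩
  simp only [mem_plSet_unit_iff hA hμ, hmod, true_and, Finset.coe_image, Finset.coe_filter,
    Set.mem_image, Set.mem_ofPred_eq, Finset.mem_range, plTuple, Prod.mk.injEq]
  constructor
  · rintro ⟨⟨hB₁, hB₁', hgcd⟩, rfl, rfl, rfl⟩
    lift B₁ to ℕ using hB₁
    refine ⟨B₁, ⟨by exact_mod_cast hB₁', ?_⟩, rfl, rfl, rfl, rfl⟩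
    rwa [Int.gcd_natCast_natCast, Nat.gcd_comm] at hgcd
  · rintro ⟨x, ⟨hx, hgcd⟩, rfl, rfl, rfl, rfl⟩
    refine ⟨⟨x.cast_nonneg, by exact_mod_cast hx, ?_⟩, rfl, rfl, rfl⟩
    rwa [Int.gcd_natCast_natCast, Nat.gcd_comm]

lemma plSet_unit_eq_empty {A : ℕ} (hA : 0 < A) {μ : ℤ} (hμ : μ = 1 ∨ μ = -1)
    (hmod : ¬ (A : ℤ) ≡ -μ [ZMOD 4]) : PlSet A μ = ∅ := by
  ext ⟨B₁, C₁, B₂, C₂⟩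
  simp [mem_plSet_unit_iff hA hμ, hmod]

lemma ssplit_plTuple {A : ℕ} (hA : Odd A) {μ : ℤ} (hμ : μ = 1 ∨ μ = -1)
    (hmod : (A : ℤ) ≡ -μ [ZMOD 4]) (x : ℕ) :
    ssplit A μ (plTuple A μ x) = jacobiSym x A := by
  have hD : Int.gcd A μ = 1 := by rcases hμ with rfl | rfl <;> simp
  have hsign : kron (kron (-1) x) (-(A * μ)) = 1 := by
    rcases kron_neg_one_left_eq_one_or_neg_one x with h | h <;> rw [h]
    exacts [kron_one_left _, kron_neg_one_left_neg_mul_of_modEq hA hμ hmod]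
  have hAμ : kron A μ = 1 := by
    rcases hμ with rfl | rfl
    exacts [kron_one_right _, kron_neg_one_right (Nat.cast_nonneg A)]
  have hμμ : μ.sign * μ = 1 := by rcases hμ with rfl | rfl <;> rfl
  simp only [ssplit, plTuple, hD, Nat.cast_one, Int.one_gcd, Int.ediv_one, mul_zero,
    kron_one_left, hsign, hAμ, hμμ, kron_one_right, kron_natCast_of_odd_s12 _ hA, one_mul, mul_one]

theorem sigmaExp_unit_eq_sum_jacobiSym {A : ℕ} (hA : Odd A) {μ : ℤ} (hμ : μ = 1 ∨ μ = -1)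
    (hmod : (A : ℤ) ≡ -μ [ZMOD 4]) (m₁ m₂ : ℤ) :
    SigmaExp A μ m₁ m₂ = ∑ x ∈ (Finset.range A).filter (fun x => Nat.gcd x A = 1),
      (jacobiSym x A : ℂ) * e2pi (m₁ * x / A) := by
  rw [SigmaExp, plSet_unit_eq_image hA.pos hμ hmod, Finset.tsum_subtype' _ fun v =>
      (ssplit A μ v : ℂ) * e2pi (m₁ * (v.1 / (A : ℤ)) + m₂ * (v.2.2.1 / μ)),
    Finset.sum_image fun x _ y _ h => plTuple_injective _ _ h]
  refine Finset.sum_congr rfl fun x _ => ?_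
  rw [ssplit_plTuple hA hμ hmod]
  simp only [plTuple, Int.cast_natCast, Int.cast_zero, zero_div, mul_zero, add_zero, mul_div_assoc]

theorem sigmaExp_unit_eq_zero {A : ℕ} (hA : 0 < A) {μ : ℤ} (hμ : μ = 1 ∨ μ = -1)
    (hmod : ¬ (A : ℤ) ≡ -μ [ZMOD 4]) (m₁ m₂ : ℤ) : SigmaExp A μ m₁ m₂ = 0 := by
  rw [SigmaExp, plSet_unit_eq_empty hA hμ hmod, tsum_empty]

theorem sigma_prime_power_one_general (p : ℕ) (hp : p.Prime) (hp2 : p ≠ 2) (k : ℕ)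
    (μ : ℤ) (hμ : μ = 1 ∨ μ = -1) (m₁ m₂ : ℤ) :
    SigmaExp 1 (-1) m₁ m₂ = 1 ∧
    SigmaExp 1 1 m₁ m₂ = 0 ∧
    ((p : ℤ) ^ k ≡ μ [ZMOD 4] → SigmaExp ((p : ℤ) ^ k) μ m₁ m₂ = 0) ∧
    ((p : ℤ) ^ k ≡ -μ [ZMOD 4] → SigmaExp ((p : ℤ) ^ k) μ m₁ m₂ = gaussG p k m₁ k) := by
  have hodd : Odd (p ^ k) := (hp.odd_of_ne_two hp2).pow
  refine ⟨?_, sigmaExp_unit_eq_zero one_pos (Or.inl rfl) (by decide) m₁ m₂,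
    fun hmod => ?_, fun hmod => ?_⟩
  · simpa [e2pi] using sigmaExp_unit_eq_sum_jacobiSym odd_one (Or.inr rfl) (by decide) m₁ m₂
  · have hne : ¬ ((p ^ k : ℕ) : ℤ) ≡ -μ [ZMOD 4] := by
      rw [Int.ModEq] at hmod ⊢; push_cast; rcases hμ with rfl | rfl <;> omega
    simpa using sigmaExp_unit_eq_zero hodd.pos hμ hne m₁ m₂
  · rw [← Nat.cast_pow] at hmod ⊢
    rw [sigmaExp_unit_eq_sum_jacobiSym hodd hμ hmod, gaussG]
    refine Finset.sum_congr rfl fun x _ => ?_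
    rw [jacobiSym.pow_right, ← kron_natCast_of_odd_s12 _ (hp.odd_of_ne_two hp2)]
    push_cast
    rfl

/-- Values of `Σ(1,±1;m₁,m₂)` and `Σ(p^k,±1;m₁,m₂)` for an odd prime `p`. -/
theorem sigma_prime_power_one (p : ℕ) (hp : p.Prime) (hp2 : p ≠ 2) (k : ℕ) (hk : 0 < k)
    (μ : ℤ) (hμ : μ = 1 ∨ μ = -1) (m₁ m₂ : ℤ) :
    SigmaExp 1 (-1) m₁ m₂ = 1 ∧
    SigmaExp 1 1 m₁ m₂ = 0 ∧
    ((p : ℤ) ^ k ≡ μ [ZMOD 4] → SigmaExp ((p : ℤ) ^ k) μ m₁ m₂ = 0) ∧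
    ((p : ℤ) ^ k ≡ -μ [ZMOD 4] → SigmaExp ((p : ℤ) ^ k) μ m₁ m₂ = gaussG p k m₁ k) :=
  sigma_prime_power_one_general p hp hp2 k μ hμ m₁ m₂
end
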